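/- arXiv:1302.5790 — 7 statements merged into one kernel-verified Lean document; each statement's English description precedes it below -/
import Mathlib

section
/- The geodesic distance on the real projective plane is not a kernel of negative type: there exist six points x₁,…,x₆ in RP² and real numbers t₁,…,t₆ with ∑tᵢ = 0 such that ∑ᵢⱼ tᵢtⱼ d(xᵢ,xⱼ) > 0. -/
/-!
Take the lines `a = [1:0:1]`, `b = [1:0:0]`, `c = [1:0:-1]` in the plane `x₂ = 0` and
`a' = [0:1:1]`, `b' = [0:1:0]`, `c' = [0:1:-1]` in the plane `x₁ = 0`, with weights `-1` on
`a, c, b'` and `+1` on `b, a', c'`. Within each triple the middle line lies at `π/4` from the two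
orthogonal outer ones, so those contributions cancel. Across the triples, `b` and `b'` are
orthogonal to the whole other triple, while `a, c` meet `a', c'` at angle `π/3` (cosine `1/2`).
The double sum is therefore `2 (3 · π/2 - 4 · π/3) = π/3 > 0`.
-/

/-- Geodesic distance on `RP²` in terms of nonzero representative vectors in `ℝ³`:
`d(x,y) = arccos(|(x,y)| / (‖x‖‖y‖))`. -/
noncomputable def rp2Dist (x y : EuclideanSpace ℝ (Fin 3)) : ℝ :=
  Real.arccos (|inner ℝ x y| / (‖x‖ * ‖y‖))

open Real

lemma rp2Dist_vec3 (a₁ a₂ a₃ b₁ b₂ b₃ : ℝ) :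
    rp2Dist !₂[a₁, a₂, a₃] !₂[b₁, b₂, b₃] =
      arccos (|a₁ * b₁ + a₂ * b₂ + a₃ * b₃| /
        (√(a₁ ^ 2 + a₂ ^ 2 + a₃ ^ 2) * √(b₁ ^ 2 + b₂ ^ 2 + b₃ ^ 2))) := by
  simp [rp2Dist, EuclideanSpace.norm_eq, EuclideanSpace.inner_eq_star_dotProduct,
    Fin.sum_univ_three, mul_comm, add_assoc]

lemma arccos_one_half : arccos (1 / 2) = π / 3 :=
  arccos_eq_of_eq_cos (by positivity) (by linarith [pi_pos]) cos_pi_div_three.symm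

lemma arccos_inv_sqrt_two : arccos (√2)⁻¹ = π / 4 := by
  refine arccos_eq_of_eq_cos (by positivity) (by linarith [pi_pos]) ?_
  rw [cos_pi_div_four, inv_eq_one_div, div_eq_div_iff (by positivity) two_ne_zero,
    one_mul, mul_self_sqrt zero_le_two]

def rp2Config : Fin 6 → EuclideanSpace ℝ (Fin 3) :=
  ![!₂[1, 0, 1], !₂[1, 0, 0], !₂[1, 0, -1], !₂[0, 1, 1], !₂[0, 1, 0], !₂[0, 1, -1]]

def rp2Weights : Fin 6 → ℝ := ![-1, 1, -1, 1, -1, 1]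

lemma rp2Config_ne_zero (i : Fin 6) : rp2Config i ≠ 0 := by
  fin_cases i <;> simp [rp2Config]

lemma sum_rp2Weights : ∑ i, rp2Weights i = 0 := by
  simp [rp2Weights, Fin.sum_univ_six]

lemma sum_rp2Weights_mul_rp2Dist :
    ∑ i, ∑ j, rp2Weights i * rp2Weights j * rp2Dist (rp2Config i) (rp2Config j) = π / 3 := by
  simp only [Fin.sum_univ_six, rp2Config, rp2Weights, Matrix.cons_val_zero, Matrix.cons_val_one,
    Matrix.cons_val, rp2Dist_vec3]
  norm_num [arccos_one_half, arccos_inv_sqrt_two]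
  ring

/-- The geodesic distance on the real projective plane is not a kernel of negative
type: there are six points and reals `tᵢ` with `∑ tᵢ = 0` but
`∑ᵢⱼ tᵢ tⱼ d(xᵢ,xⱼ) > 0`. -/
theorem rp2_dist_not_negative_type :
    ∃ (x : Fin 6 → EuclideanSpace ℝ (Fin 3)) (t : Fin 6 → ℝ),
      (∀ i, x i ≠ 0) ∧ (∑ i, t i) = 0 ∧
      0 < ∑ i, ∑ j, t i * t j * rp2Dist (x i) (x j) :=
  ⟨rp2Config, rp2Weights, rp2Config_ne_zero, sum_rp2Weights,
    sum_rp2Weights_mul_rp2Dist ▸ by positivity⟩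
end

section
/- Let (𝔚, μ) be a measure space and suppose a semimetric d on a set X is given by d(x,y) = μ(S_x △ S_y), where S_x ⊆ 𝔚 is a measurable set of finite measure for each x ∈ X. Then d is a hypermetric: for every finite subset {x₁,…,xₘ} of X and integers t₁,…,tₘ with ∑tᵢ = 1, one has ∑ᵢⱼ tᵢtⱼ d(xᵢ,xⱼ) ≤ 0. -/
/-!
Writing `𝟙_A` for the real indicator of `A`, one has `(𝟙_A - 𝟙_B)² = 𝟙_{A △ B}`, hence
`d(x, y) = ∫ (𝟙_{S_x} - 𝟙_{S_y})² dμ`, and the hypermetric form is the integral of the forms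
`∑ᵢⱼ tᵢ tⱼ (eᵢ - eⱼ)²` of the `0/1`-vectors `eᵢ = 𝟙_{S_{xᵢ}}(w)`. Expanding the square, such a
form equals `2 ((∑ tᵢ)(∑ tᵢ eᵢ²) - (∑ tᵢ eᵢ)²) = 2 (n - n²)` with `n = ∑ tᵢ eᵢ ∈ ℤ`, which is
nonpositive.
-/

open MeasureTheory Finset

section Algebra

variable {ι : Type*} [Fintype ι]

theorem sum_sum_mul_mul_sub_sq {R : Type*} [CommRing R] (t e : ι → R) :
    ∑ i, ∑ j, t i * t j * (e i - e j) ^ 2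
      = 2 * ((∑ i, t i) * ∑ i, t i * e i ^ 2 - (∑ i, t i * e i) ^ 2) := by
  calc ∑ i, ∑ j, t i * t j * (e i - e j) ^ 2
      = ∑ i, ∑ j, (t i * e i ^ 2 * t j + t i * (t j * e j ^ 2)
          - 2 * (t i * e i) * (t j * e j)) := by
        refine sum_congr rfl fun i _ => sum_congr rfl fun j _ => ?_
        ring
    _ = 2 * ((∑ i, t i) * ∑ i, t i * e i ^ 2 - (∑ i, t i * e i) ^ 2) := by
        simp only [sum_add_distrib, sum_sub_distrib, ← mul_sum, ← sum_mul]
        ring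

theorem Int.sum_sum_mul_mul_sub_sq_nonpos (t e : ι → ℤ) (ht : ∑ i, t i = 1)
    (he : ∀ i, e i ^ 2 = e i) : ∑ i, ∑ j, t i * t j * (e i - e j) ^ 2 ≤ 0 := by
  simp only [sum_sum_mul_mul_sub_sq, ht, he, one_mul]
  linarith [Int.le_self_sq (∑ i, t i * e i)]

theorem sum_sum_mul_mul_sq_indicator_sub_indicator_nonpos {α : Type*} (A : ι → Set α) (a : α)
    (t : ι → ℤ) (ht : ∑ i, t i = 1) :
    ∑ i, ∑ j, (t i : ℝ) * t j * ((A i).indicator 1 a - (A j).indicator 1 a) ^ 2 ≤ 0 := by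
  have hcast (i : ι) : (((A i).indicator 1 a : ℤ) : ℝ) = (A i).indicator 1 a := by
    by_cases h : a ∈ A i <;> simp [h]
  have hcut := Int.sum_sum_mul_mul_sub_sq_nonpos t (fun i => (A i).indicator 1 a) ht fun i => by
    by_cases h : a ∈ A i <;> simp [h]
  simp_rw [← hcast]
  exact_mod_cast hcut

end Algebra

theorem Set.sq_indicator_one_sub_indicator_one {α R : Type*} [Ring R] (s t : Set α) (a : α) :
    (s.indicator (1 : α → R) a - t.indicator 1 a) ^ 2 = (symmDiff s t).indicator 1 a := by
  rw [← Set.apply_indicator_symmDiff (g := (· ^ 2)) neg_sq]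
  by_cases h : a ∈ symmDiff s t <;> simp [h]

section Measure

variable {α : Type*} [MeasurableSpace α] {μ : Measure α} {s t : Set α}

theorem integral_sq_indicator_one_sub_indicator_one (hs : MeasurableSet s)
    (ht : MeasurableSet t) :
    ∫ a, (s.indicator (1 : α → ℝ) a - t.indicator 1 a) ^ 2 ∂μ = μ.real (symmDiff s t) := by
  simp_rw [Set.sq_indicator_one_sub_indicator_one]
  exact integral_indicator_one (hs.symmDiff ht)

theorem integrable_sq_indicator_one_sub_indicator_one (hs : MeasurableSet s)
    (ht : MeasurableSet t) (hμs : μ s ≠ ⊤) (hμt : μ t ≠ ⊤) :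
    Integrable (fun a => (s.indicator (1 : α → ℝ) a - t.indicator 1 a) ^ 2) μ := by
  simp_rw [Set.sq_indicator_one_sub_indicator_one]
  exact (integrable_indicator_iff (hs.symmDiff ht)).2
    (integrableOn_const (measure_symmDiff_ne_top hμs hμt))

end Measure

/-- If a semimetric `d` on `X` is given by `d(x,y) = μ(S_x △ S_y)` for measurable
sets `S_x` of finite measure, then `d` is a hypermetric: for every finite family
`x₁,…,xₘ` in `X` and integers `tᵢ` with `∑ tᵢ = 1` one has
`∑ᵢⱼ tᵢ tⱼ d(xᵢ,xⱼ) ≤ 0`. -/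
theorem measure_definite_kernel_hypermetric
    {W : Type*} [MeasurableSpace W] (μ : Measure W) {X : Type*}
    (S : X → Set W) (hmeas : ∀ x, MeasurableSet (S x))
    (hfin : ∀ x, μ (S x) < ⊤)
    (d : X → X → ℝ) (hd : ∀ x y, d x y = (μ (symmDiff (S x) (S y))).toReal)
    (m : ℕ) (x : Fin m → X) (t : Fin m → ℤ) (ht : (∑ i, t i) = 1) :
    ∑ i, ∑ j, (t i : ℝ) * (t j : ℝ) * d (x i) (x j) ≤ 0 := by
  set f : Fin m → W → ℝ := fun i => (S (x i)).indicator 1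
  have hint (i j : Fin m) : Integrable (fun w => (t i : ℝ) * t j * (f i w - f j w) ^ 2) μ :=
    (integrable_sq_indicator_one_sub_indicator_one (hmeas _) (hmeas _) (hfin _).ne
      (hfin _).ne).const_mul _
  calc ∑ i, ∑ j, (t i : ℝ) * t j * d (x i) (x j)
      = ∫ w, ∑ i, ∑ j, (t i : ℝ) * t j * (f i w - f j w) ^ 2 ∂μ := by
        rw [integral_finsetSum _ fun i _ => integrable_finsetSum _ fun j _ => hint i j]
        refine sum_congr rfl fun i _ => ?_
        rw [integral_finsetSum _ fun j _ => hint i j]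
        refine sum_congr rfl fun j _ => ?_
        rw [integral_const_mul, integral_sq_indicator_one_sub_indicator_one (hmeas _) (hmeas _),
          hd, measureReal_def]
    _ ≤ 0 := integral_nonpos fun w => sum_sum_mul_mul_sq_indicator_sub_indicator_nonpos _ w t ht
end

section
/- If a semimetric d on a set X is hypermetric, then d is a kernel of negative type. -/
open Filter Topology

/-- Auxiliary: the negative-type inequality for *integer* coefficients follows from
the hypermetric inequality, by scaling the coefficients by `n+1`, appending one
extra point with coefficient `1`, and letting `n → ∞`. -/
theorem int_neg_type_aux
    {X : Type*} (d : X → X → ℝ)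
    (hself : ∀ x, d x x = 0) (hsymm : ∀ x y, d x y = d y x)
    (hyper : ∀ (m : ℕ) (x : Fin m → X) (t : Fin m → ℤ), (∑ i, t i) = 1 →
      ∑ i, ∑ j, (t i : ℝ) * (t j : ℝ) * d (x i) (x j) ≤ 0)
    (m : ℕ) (x : Fin m → X) (s : Fin m → ℤ) (hs : (∑ i, s i) = 0) :
    ∑ i, ∑ j, (s i : ℝ) * (s j : ℝ) * d (x i) (x j) ≤ 0 := by
  rcases Nat.eq_zero_or_pos m with hm | hm
  · subst hm; simp
  set x₀ := x ⟨0, hm⟩ with hx₀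
  set Q := ∑ i, ∑ j, (s i : ℝ) * (s j : ℝ) * d (x i) (x j) with hQ
  set A := ∑ i, (s i : ℝ) * d (x i) x₀ with hA
  have key : ∀ n : ℕ, Q ≤ (-2*A) / ((n:ℝ)+1) := by
    intro n
    have h := hyper (m+1) (Fin.snoc x x₀) (Fin.snoc (fun i => ((n:ℤ)+1) * s i) 1) ?_
    swap
    · rw [Fin.sum_univ_castSucc]
      simp [Fin.snoc_castSucc, Fin.snoc_last, ← Finset.mul_sum, hs]
    · simp only [Fin.sum_univ_castSucc, Fin.snoc_castSucc, Fin.snoc_last] at h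
      push_cast at h
      rw [hself x₀] at h
      have e1 : ∑ i, ((∑ j, ((n:ℝ)+1)*(s i)*(((n:ℝ)+1)*(s j))*d (x i) (x j)) +
          ((n:ℝ)+1)*(s i)*1*d (x i) x₀) = ((n:ℝ)+1)^2*Q + ((n:ℝ)+1)*A := by
        rw [Finset.sum_add_distrib, hQ, hA, Finset.mul_sum, Finset.mul_sum]
        congr 1
        · refine Finset.sum_congr rfl fun i _ => ?_
          rw [Finset.mul_sum]
          exact Finset.sum_congr rfl fun j _ => by ring
        · exact Finset.sum_congr rfl fun i _ => by ring
      have e2 : ∑ i, 1*(((n:ℝ)+1)*(s i))*d x₀ (x i) = ((n:ℝ)+1)*A := by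
        rw [hA, Finset.mul_sum]
        exact Finset.sum_congr rfl fun i _ => by rw [hsymm]; ring
      rw [e1, e2] at h
      have hn : (0:ℝ) < (n:ℝ)+1 := by positivity
      rw [le_div_iff₀ hn]
      nlinarith [h, hn]
  have hlim : Tendsto (fun n : ℕ => (-2*A) / ((n:ℝ)+1)) atTop (𝓝 0) :=
    Tendsto.div_atTop tendsto_const_nhds
      (tendsto_atTop_add_const_right _ 1 tendsto_natCast_atTop_atTop)
  exact ge_of_tendsto hlim (Filter.Eventually.of_forall key)

/-- Auxiliary: `round ((n+1)*a) / (n+1) → a`. -/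
theorem round_div_tendsto_aux (a : ℝ) :
    Tendsto (fun n : ℕ => (round (((n:ℝ)+1)*a) : ℝ) / ((n:ℝ)+1)) atTop (𝓝 a) := by
  rw [← tendsto_sub_nhds_zero_iff]
  have hg : Tendsto (fun n : ℕ => (1/2 : ℝ) / ((n:ℝ)+1)) atTop (𝓝 0) :=
    Tendsto.div_atTop tendsto_const_nhds
      (tendsto_atTop_add_const_right _ 1 tendsto_natCast_atTop_atTop)
  refine squeeze_zero_norm (fun n => ?_) hg
  have hn : (0:ℝ) < (n:ℝ)+1 := by positivity
  have hne : ((n:ℝ)+1) ≠ 0 := ne_of_gt hn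
  rw [Real.norm_eq_abs, abs_sub_comm]
  have heq : a - (round (((n:ℝ)+1)*a) : ℝ) / ((n:ℝ)+1)
      = (((n:ℝ)+1)*a - (round (((n:ℝ)+1)*a) : ℝ)) / ((n:ℝ)+1) := by
    field_simp
  rw [heq, abs_div, abs_of_pos hn, div_le_div_iff_of_pos_right hn]
  exact abs_sub_round (((n:ℝ)+1)*a)

/-- A hypermetric semimetric is a kernel of negative type: if a semimetric `d` on
`X` satisfies `∑ᵢⱼ tᵢ tⱼ d(xᵢ,xⱼ) ≤ 0` for all finite families of points and all
integers `tᵢ` with `∑ tᵢ = 1`, then `∑ᵢⱼ tᵢ tⱼ d(xᵢ,xⱼ) ≤ 0` for all finite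
families of points and all reals `tᵢ` with `∑ tᵢ = 0`. -/
theorem hypermetric_implies_negative_type
    {X : Type*} (d : X → X → ℝ)
    (hself : ∀ x, d x x = 0) (hsymm : ∀ x y, d x y = d y x)
    (hnonneg : ∀ x y, 0 ≤ d x y)
    (hyper : ∀ (m : ℕ) (x : Fin m → X) (t : Fin m → ℤ), (∑ i, t i) = 1 →
      ∑ i, ∑ j, (t i : ℝ) * (t j : ℝ) * d (x i) (x j) ≤ 0) :
    ∀ (m : ℕ) (x : Fin m → X) (t : Fin m → ℝ), (∑ i, t i) = 0 →
      ∑ i, ∑ j, t i * t j * d (x i) (x j) ≤ 0 := by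
  intro m x t ht
  cases m with
  | zero => simp
  | succ k =>
    -- integer approximations with sum zero
    set z : ℕ → Fin (k+1) → ℤ := fun n =>
      Fin.snoc (fun i : Fin k => round (((n:ℝ)+1) * t i.castSucc))
        (-(∑ i : Fin k, round (((n:ℝ)+1) * t i.castSucc))) with hz
    have hzsum : ∀ n, (∑ i, z n i) = 0 := by
      intro n
      rw [Fin.sum_univ_castSucc]
      simp [hz]
    -- rescaled real approximations
    set u : ℕ → Fin (k+1) → ℝ := fun n i => (z n i : ℝ) / ((n:ℝ)+1) with hu
    have hQu : ∀ n, ∑ i, ∑ j, u n i * u n j * d (x i) (x j) ≤ 0 := by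
      intro n
      have hn : (0:ℝ) < ((n:ℝ)+1)^2 := by positivity
      have hcalc : ∑ i, ∑ j, u n i * u n j * d (x i) (x j)
          = (∑ i, ∑ j, (z n i : ℝ) * (z n j : ℝ) * d (x i) (x j)) / (((n:ℝ)+1)^2) := by
        rw [Finset.sum_div]
        refine Finset.sum_congr rfl fun i _ => ?_
        rw [Finset.sum_div]
        refine Finset.sum_congr rfl fun j _ => ?_
        rw [hu]
        rw [div_mul_div_comm, div_mul_eq_mul_div, sq]
      rw [hcalc]
      exact div_nonpos_of_nonpos_of_nonneg
        (int_neg_type_aux d hself hsymm hyper (k+1) x (z n) (hzsum n)) (le_of_lt hn)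
    -- u n converges pointwise to t
    have hconv : ∀ i, Tendsto (fun n => u n i) atTop (𝓝 (t i)) := by
      intro i
      refine Fin.lastCases ?_ ?_ i
      · -- last coordinate
        have hlast : t (Fin.last k) = -(∑ i : Fin k, t i.castSucc) := by
          have := ht
          rw [Fin.sum_univ_castSucc] at this
          linarith
        have : (fun n => u n (Fin.last k))
            = fun n : ℕ => -(∑ i : Fin k, (round (((n:ℝ)+1) * t i.castSucc) : ℝ) / ((n:ℝ)+1)) := by
          funext n
          simp only [hu, hz, Fin.snoc_last]
          push_cast
          rw [neg_div, Finset.sum_div]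
        rw [this, hlast]
        exact (tendsto_finset_sum _ fun i _ => round_div_tendsto_aux (t i.castSucc)).neg
      · -- castSucc coordinates
        intro i
        have : (fun n => u n i.castSucc)
            = fun n : ℕ => (round (((n:ℝ)+1) * t i.castSucc) : ℝ) / ((n:ℝ)+1) := by
          funext n
          simp only [hu, hz, Fin.snoc_castSucc]
        rw [this]
        exact round_div_tendsto_aux (t i.castSucc)
    have hQconv : Tendsto (fun n => ∑ i, ∑ j, u n i * u n j * d (x i) (x j)) atTop
        (𝓝 (∑ i, ∑ j, t i * t j * d (x i) (x j))) := by
      refine tendsto_finset_sum _ fun i _ => tendsto_finset_sum _ fun j _ => ?_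
      exact ((hconv i).mul (hconv j)).mul_const _
    exact le_of_tendsto hQconv (Filter.Eventually.of_forall hQu)
end

section
/- For a Coxeter system (W,S), the gallery distance between chambers c and c′ of the Coxeter complex equals the number of walls separating c and c′; consequently the gallery distance is a kernel of negative type on the set of chambers. -/
/-!
Tits' parity representation: the simple reflections act on `W × ℤˣ` by
`sᵢ • (t, ε) = (sᵢ t sᵢ, ±ε)`, the sign flipping exactly when `t = sᵢ`. These involutions satisfy
the Coxeter relations, so they extend to an action of `W`, and the sign that `(t, 1)` picks up
under `w = π ω` is the parity of the number of occurrences of `t` in the right inversion sequence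
of `ω`. Being independent of `ω`, it is `-1` exactly when `t` is a right inversion of `w`; hence
`w` has `ℓ w` inversions and the inversion sets obey the cocycle rule
`N(uv) = N(u) ∆ u N(v) u⁻¹`. A wall `t` separates `c` and `c'` iff `t ∈ N(c) ∆ N(c')`, which is
`c N(c⁻¹c') c⁻¹`. Finally `#(N(c) ∆ N(c'))` is a sum of squared differences of indicator
functions, and `∑ᵢⱼ tᵢ tⱼ (fᵢ - fⱼ)² = -2 (∑ᵢ tᵢ fᵢ)²` whenever `∑ᵢ tᵢ = 0`.
-/

open scoped symmDiff

theorem sum_sum_mul_mul_sub_sq_eq {ι : Type*} [Fintype ι] (t f : ι → ℝ) (ht : ∑ i, t i = 0) :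
    ∑ i, ∑ j, t i * t j * (f i - f j) ^ 2 = -2 * (∑ i, t i * f i) ^ 2 := by
  have hexpand : ∀ i j, t i * t j * (f i - f j) ^ 2 =
      t j * (t i * f i ^ 2) + t i * (t j * f j ^ 2) - 2 * (t i * f i) * (t j * f j) := by
    intro i j; ring
  simp only [hexpand, Finset.sum_add_distrib, Finset.sum_sub_distrib, ← Finset.sum_mul,
    ← Finset.mul_sum, ht]
  ring

theorem ncard_symmDiff_eq_sum_indicator_sub_sq {α : Type*} {A B : Set α} {U : Finset α}
    (hA : A ⊆ U) (hB : B ⊆ U) :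
    ((A ∆ B).ncard : ℝ) = ∑ x ∈ U, (A.indicator 1 x - B.indicator 1 x) ^ 2 := by
  classical
  have hsq : ∀ x, (A.indicator 1 x - B.indicator 1 x : ℝ) ^ 2 = if x ∈ A ∆ B then 1 else 0 := by
    intro x
    by_cases hxA : x ∈ A <;> by_cases hxB : x ∈ B <;> simp [hxA, hxB, Set.mem_symmDiff]
  have hfilter : (↑(U.filter (· ∈ A ∆ B)) : Set α) = A ∆ B := by
    ext x
    simp only [Finset.coe_filter, Set.mem_ofPred_eq, and_iff_right_iff_imp]
    exact fun hx => (Set.symmDiff_subset_union hx).elim (hA ·) (hB ·)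
  simp only [hsq, Finset.sum_boole]
  rw [← Set.ncard_coe_finset, hfilter]

theorem sum_sum_mul_mul_ncard_symmDiff_nonpos {ι α : Type*} [Fintype ι] (A : ι → Set α)
    (hA : ∀ i, (A i).Finite) (t : ι → ℝ) (ht : ∑ i, t i = 0) :
    ∑ i, ∑ j, t i * t j * ((A i ∆ A j).ncard : ℝ) ≤ 0 := by
  set U := (Set.finite_iUnion hA).toFinset
  have hAU : ∀ i, A i ⊆ U := fun i => by
    simpa only [U, Set.Finite.coe_toFinset] using Set.subset_iUnion A i
  calc ∑ i, ∑ j, t i * t j * ((A i ∆ A j).ncard : ℝ)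
      = ∑ x ∈ U, ∑ i, ∑ j,
          t i * t j * ((A i).indicator (1 : α → ℝ) x - (A j).indicator 1 x) ^ 2 := by
        simp only [ncard_symmDiff_eq_sum_indicator_sub_sq (hAU _) (hAU _), Finset.mul_sum]
        exact (Finset.sum_congr rfl fun i _ => Finset.sum_comm).trans Finset.sum_comm
    _ ≤ 0 := Finset.sum_nonpos fun x _ => by
        rw [sum_sum_mul_mul_sub_sq_eq t _ ht]
        nlinarith [sq_nonneg (∑ i, t i * (A i).indicator (1 : α → ℝ) x)]

namespace CoxeterSystem

open scoped Classical

variable {B W : Type*} [Group W] {M : CoxeterMatrix B} (cs : CoxeterSystem M W)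

local prefix:100 "s" => cs.simple
local prefix:100 "π" => cs.wordProd
local prefix:100 "ℓ" => cs.length
local prefix:100 "ris " => cs.rightInvSeq

theorem simple_mul_mul_simple_eq_iff (i : B) (w x : W) :
    s i * w * s i = x ↔ w = s i * x * s i := by
  constructor <;> rintro rfl <;> simp [mul_assoc, cs.simple_mul_simple_cancel_left]

theorem simple_mul_mul_simple_eq_simple_iff (i : B) (w : W) : s i * w * s i = s i ↔ w = s i := by
  rw [simple_mul_mul_simple_eq_iff, cs.simple_mul_simple_cancel_right]

noncomputable def simpleParityPerm (i : B) : Equiv.Perm (W × ℤˣ) :=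
  Function.Involutive.toPerm (fun x => (s i * x.1 * s i, x.2 * if x.1 = s i then -1 else 1))
    fun x => by
      ext1
      · simp [mul_assoc, cs.simple_mul_simple_cancel_left]
      · by_cases hx : x.1 = s i <;> simp [hx, cs.simple_mul_mul_simple_eq_simple_iff]

theorem simpleParityPerm_apply (i : B) (t : W) (ε : ℤˣ) :
    cs.simpleParityPerm i (t, ε) = (s i * t * s i, ε * if t = s i then -1 else 1) := rfl

theorem simpleParityPerm_mul_pow_apply (i j : B) (k : ℕ) (t : W) (ε : ℤˣ) :
    ((cs.simpleParityPerm i * cs.simpleParityPerm j) ^ k) (t, ε) =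
      ((s i * s j) ^ k * t * (s j * s i) ^ k,
        ε * ∏ n ∈ Finset.range (2 * k), if t = (s j * s i) ^ n * s j then -1 else 1) := by
  induction k generalizing t ε with
  | zero => simp
  | succ k ih =>
    have hshift : ∀ n : ℕ, s i * (s j * t * s j) * s i = (s j * s i) ^ n * s j ↔
        t = (s j * s i) ^ (n + 1 + 1) * s j := by
      intro n
      rw [simple_mul_mul_simple_eq_iff, simple_mul_mul_simple_eq_iff, pow_succ', pow_succ]
      simp only [mul_assoc]
    have hone : s j * t * s j = s i ↔ t = (s j * s i) ^ 1 * s j := by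
      rw [simple_mul_mul_simple_eq_iff, pow_one]
    rw [pow_succ, Equiv.Perm.mul_apply, Equiv.Perm.mul_apply, simpleParityPerm_apply,
      simpleParityPerm_apply, ih, Prod.mk.injEq]
    constructor
    · rw [pow_succ (s i * s j), pow_succ' (s j * s i)]
      simp only [mul_assoc]
    · rw [show 2 * (k + 1) = 2 * k + 1 + 1 by ring, Finset.prod_range_succ',
        Finset.prod_range_succ']
      simp only [hshift, hone, zero_add, pow_zero, one_mul]
      ac_rfl

theorem isLiftable_simpleParityPerm : M.IsLiftable cs.simpleParityPerm := by
  intro i j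
  ext1 ⟨t, ε⟩
  -- `(sⱼ sᵢ)ⁿ sⱼ` has period `M i j` in `n`, so over `2 * M i j` indices every sign occurs twice.
  have hperiodic : ∀ n, (s j * s i) ^ (M i j + n) * s j = (s j * s i) ^ n * s j := by
    intro n
    rw [pow_add, cs.simple_mul_simple_pow', one_mul]
  rw [simpleParityPerm_mul_pow_apply, cs.simple_mul_simple_pow, cs.simple_mul_simple_pow',
    two_mul, Finset.prod_range_add]
  simp only [hperiodic, Int.units_mul_self, mul_one, one_mul, Equiv.Perm.one_apply]

noncomputable def parityRep : W →* Equiv.Perm (W × ℤˣ) :=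
  cs.lift ⟨cs.simpleParityPerm, cs.isLiftable_simpleParityPerm⟩

theorem parityRep_wordProd_apply (ω : List B) (t : W) (ε : ℤˣ) :
    cs.parityRep (π ω) (t, ε) = (π ω * t * (π ω)⁻¹, ε * (-1) ^ (ris ω).count t) := by
  induction ω with
  | nil => simp [rightInvSeq]
  | cons i ω ih =>
    have hcond : π ω * t * (π ω)⁻¹ = s i ↔ (π ω)⁻¹ * s i * π ω = t := by
      rw [eq_comm, ← mul_inv_eq_iff_eq_mul, ← inv_mul_eq_iff_eq_mul, inv_inv, mul_assoc]
    rw [wordProd_cons, map_mul, Equiv.Perm.mul_apply, ih, parityRep, lift_apply_simple,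
      simpleParityPerm_apply, Prod.mk.injEq]
    constructor
    · simp only [mul_inv_rev, inv_simple, mul_assoc]
    · simp only [rightInvSeq, List.count_cons, hcond, beq_iff_eq]
      split_ifs <;> simp [pow_succ]

noncomputable def inversionSign (w t : W) : ℤˣ := (cs.parityRep w (t, 1)).2

theorem inversionSign_wordProd (ω : List B) (t : W) :
    cs.inversionSign (π ω) t = (-1) ^ (ris ω).count t := by
  rw [inversionSign, parityRep_wordProd_apply, one_mul]

theorem parityRep_apply (w t : W) (ε : ℤˣ) :
    cs.parityRep w (t, ε) = (w * t * w⁻¹, ε * cs.inversionSign w t) := by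
  obtain ⟨ω, rfl⟩ := cs.wordProd_surjective w
  rw [parityRep_wordProd_apply, inversionSign_wordProd]

theorem inversionSign_mul (v w t : W) :
    cs.inversionSign (v * w) t = cs.inversionSign w t * cs.inversionSign v (w * t * w⁻¹) := by
  rw [inversionSign, map_mul, Equiv.Perm.mul_apply, parityRep_apply, parityRep_apply, one_mul]

@[simp]
theorem inversionSign_one (t : W) : cs.inversionSign 1 t = 1 := by
  simpa using cs.inversionSign_wordProd [] t

theorem inversionSign_simple_simple (i : B) : cs.inversionSign (s i) (s i) = -1 := by
  simpa [rightInvSeq] using cs.inversionSign_wordProd [i] (s i)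

theorem inversionSign_self {t : W} (ht : cs.IsReflection t) : cs.inversionSign t t = -1 := by
  obtain ⟨u, i, rfl⟩ := ht
  have hconj : u⁻¹ * (u * s i * u⁻¹) * u⁻¹⁻¹ = s i := by group
  have hcancel := cs.inversionSign_mul u u⁻¹ (u * s i * u⁻¹)
  rw [mul_inv_cancel, inversionSign_one, hconj] at hcancel
  rw [inversionSign_mul, hconj, inversionSign_mul, inversionSign_simple_simple,
    mul_inv_cancel_right, mul_left_comm, ← hcancel, mul_one]

theorem inversionSign_mul_self (w : W) {t : W} (ht : cs.IsReflection t) :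
    cs.inversionSign (w * t) t = -cs.inversionSign w t := by
  rw [inversionSign_mul, inversionSign_self cs ht, mul_inv_cancel_right, neg_one_mul]

theorem mem_rightInvSeq_of_inversionSign_wordProd_eq_neg_one {ω : List B} {t : W}
    (h : cs.inversionSign (π ω) t = -1) : t ∈ ris ω := by
  by_contra hmem
  rw [inversionSign_wordProd, List.count_eq_zero_of_not_mem hmem, pow_zero] at h
  exact absurd h (by decide)

theorem isRightInversion_iff_inversionSign_eq_neg_one {w t : W} (ht : cs.IsReflection t) :
    cs.IsRightInversion w t ↔ cs.inversionSign w t = -1 := by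
  have hsufficient : ∀ v, cs.inversionSign v t = -1 → cs.IsRightInversion v t := by
    intro v hv
    obtain ⟨ω, hω, rfl⟩ := cs.exists_isReduced v
    exact cs.isRightInversion_of_mem_rightInvSeq hω
      (cs.mem_rightInvSeq_of_inversionSign_wordProd_eq_neg_one hv)
  refine ⟨fun hw => ?_, hsufficient w⟩
  rcases Int.units_eq_one_or (cs.inversionSign w t) with h | h
  · have hwt := hsufficient (w * t) (by rw [inversionSign_mul_self cs w ht, h])
    exact absurd hw (ht.isRightInversion_mul_left_iff.mp hwt)
  · exact h

theorem setOf_isRightInversion_wordProd {ω : List B} (hω : cs.IsReduced ω) :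
    {t | cs.IsRightInversion (π ω) t} = ↑(ris ω).toFinset := by
  ext t
  simp only [Set.mem_ofPred_eq, Finset.mem_coe, List.mem_toFinset]
  refine ⟨fun ht => ?_, cs.isRightInversion_of_mem_rightInvSeq hω⟩
  exact cs.mem_rightInvSeq_of_inversionSign_wordProd_eq_neg_one
    ((cs.isRightInversion_iff_inversionSign_eq_neg_one ht.1).mp ht)

theorem finite_setOf_isLeftInversion (w : W) : {t | cs.IsLeftInversion w t}.Finite := by
  obtain ⟨ω, hω, hw⟩ := cs.exists_isReduced w⁻¹
  simp only [← isRightInversion_inv_iff, hw, setOf_isRightInversion_wordProd cs hω]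
  exact Finset.finite_toSet _

theorem ncard_setOf_isLeftInversion (w : W) : {t | cs.IsLeftInversion w t}.ncard = ℓ w := by
  obtain ⟨ω, hω, hw⟩ := cs.exists_isReduced w⁻¹
  simp only [← isRightInversion_inv_iff, hw, setOf_isRightInversion_wordProd cs hω,
    Set.ncard_coe_finset, List.toFinset_card_of_nodup hω.nodup_rightInvSeq, length_rightInvSeq]
  rw [← cs.length_inv w, hw, hω.eq]

theorem isRightInversion_mul_iff {v w t : W} (ht : cs.IsReflection t) :
    cs.IsRightInversion (v * w) t ↔
      Xor (cs.IsRightInversion w t) (cs.IsRightInversion v (w * t * w⁻¹)) := by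
  rw [isRightInversion_iff_inversionSign_eq_neg_one cs ht,
    isRightInversion_iff_inversionSign_eq_neg_one cs ht,
    isRightInversion_iff_inversionSign_eq_neg_one cs (ht.conj w), inversionSign_mul]
  rcases Int.units_eq_one_or (cs.inversionSign w t) with h | h <;>
  rcases Int.units_eq_one_or (cs.inversionSign v (w * t * w⁻¹)) with h' | h' <;>
  simp [h, h']

theorem isLeftInversion_mul_iff {u v t : W} (ht : cs.IsReflection t) :
    cs.IsLeftInversion (u * v) t ↔
      Xor (cs.IsLeftInversion u t) (cs.IsLeftInversion v (u⁻¹ * t * u)) := by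
  simpa only [← isRightInversion_inv_iff, mul_inv_rev, inv_inv] using
    cs.isRightInversion_mul_iff (v := v⁻¹) (w := u⁻¹) ht

theorem length_lt_length_mul_iff_not_isLeftInversion {t : W} (ht : cs.IsReflection t) (w : W) :
    ℓ w < ℓ (t * w) ↔ ¬cs.IsLeftInversion w t := by
  rw [IsLeftInversion, not_and, not_lt]
  exact ⟨fun h _ => h.le, fun h => (h ht).lt_of_ne (ht.length_mul_right_ne w).symm⟩

theorem setOf_separating_eq_symmDiff (c c' : W) :
    {t | cs.IsReflection t ∧ ((ℓ c < ℓ (t * c)) ≠ (ℓ c' < ℓ (t * c')))} =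
      {t | cs.IsLeftInversion c t} ∆ {t | cs.IsLeftInversion c' t} := by
  ext t
  by_cases ht : cs.IsReflection t
  · simp only [Set.mem_ofPred_eq, Set.mem_symmDiff, ht, true_and, ne_eq, eq_iff_iff,
      length_lt_length_mul_iff_not_isLeftInversion cs ht]
    tauto
  · simp [Set.mem_symmDiff, ht, IsLeftInversion]

theorem symmDiff_setOf_isLeftInversion (c c' : W) :
    {t | cs.IsLeftInversion c t} ∆ {t | cs.IsLeftInversion c' t} =
      MulAut.conj c '' {t | cs.IsLeftInversion (c⁻¹ * c') t} := by
  ext t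
  have hmem : t ∈ MulAut.conj c '' {t | cs.IsLeftInversion (c⁻¹ * c') t} ↔
      cs.IsLeftInversion (c⁻¹ * c') (c⁻¹ * t * c) :=
    ⟨by rintro ⟨u, hu, rfl⟩; simpa [mul_assoc] using hu, fun h => ⟨_, h, by simp [mul_assoc]⟩⟩
  rw [Set.mem_symmDiff, hmem]
  by_cases ht : cs.IsReflection t
  · simp only [Set.mem_ofPred_eq]
    conv_lhs => rw [← mul_inv_cancel_left c c', isLeftInversion_mul_iff cs ht]
    unfold Xor
    tauto
  · have ht' : ¬cs.IsReflection (c⁻¹ * t * c) := by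
      simpa using (cs.isReflection_conj_iff c⁻¹ t).not.mpr ht
    simp [IsLeftInversion, ht, ht']

theorem ncard_symmDiff_setOf_isLeftInversion (c c' : W) :
    ({t | cs.IsLeftInversion c t} ∆ {t | cs.IsLeftInversion c' t}).ncard = ℓ (c⁻¹ * c') := by
  rw [symmDiff_setOf_isLeftInversion, Set.ncard_image_of_injective _ (MulAut.conj c).injective,
    ncard_setOf_isLeftInversion]

end CoxeterSystem

/-- For a Coxeter system `(W,S)`, the gallery distance `d(c,c′) = ℓ(c⁻¹c′)`
between chambers of the Coxeter complex equals the number of walls separating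
`c` and `c′` (a wall, given by a reflection `t`, separates `c` and `c′` when
exactly one of them lies in the half-space `{v | ℓ(tv) > ℓ(v)}`); consequently
the gallery distance is a kernel of negative type on the set of chambers. -/
theorem coxeter_gallery_distance_separating_walls_and_negative_type
    {B W : Type*} [Group W] {M : CoxeterMatrix B} (cs : CoxeterSystem M W) :
    (∀ c c' : W, cs.length (c⁻¹ * c') =
      Set.ncard {t : W | cs.IsReflection t ∧
        ((cs.length c < cs.length (t * c)) ≠
          (cs.length c' < cs.length (t * c')))}) ∧
    (∀ (m : ℕ) (c : Fin m → W) (t : Fin m → ℝ), (∑ i, t i) = 0 →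
      ∑ i, ∑ j, t i * t j * (cs.length ((c i)⁻¹ * c j) : ℝ) ≤ 0) := by
  have hdist : ∀ c c' : W, cs.length (c⁻¹ * c') =
      ({t | cs.IsLeftInversion c t} ∆ {t | cs.IsLeftInversion c' t}).ncard :=
    fun c c' => (cs.ncard_symmDiff_setOf_isLeftInversion c c').symm
  refine ⟨fun c c' => by rw [hdist, cs.setOf_separating_eq_symmDiff], fun m c t ht => ?_⟩
  simp only [hdist]
  exact sum_sum_mul_mul_ncard_symmDiff_nonpos _
    (fun i => cs.finite_setOf_isLeftInversion (c i)) t ht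
end

section
/- The geodesic distance on the unit sphere Sⁿ (n ≥ 1), given by d(x,y) = arccos⟨x,y⟩, is a kernel of negative type. -/
/-!
As `arccos = π / 2 - arcsin` and `∑ tᵢ = 0`, it suffices that the matrix `(arcsin ⟨xᵢ, xⱼ⟩)` be
positive semidefinite. Integrating the binomial series of `(1 - y²)^(-1/2)` termwise shows that
`arcsin` is given on `(-1, 1)` by a power series with nonnegative coefficients. By the Schur product
theorem every entrywise power of the Gram matrix `(⟨xᵢ, xⱼ⟩)` is positive semidefinite, hence so is
`(arcsin (r ⟨xᵢ, xⱼ⟩))` for `0 < r < 1`, and letting `r → 1` gives the claim.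
-/

open Real
open scoped ComplexOrder

theorem Ring.choose_add_sub_one_pos {K : Type*} [Field K] [LinearOrder K] [IsStrictOrderedRing K]
    {a : K} (ha : 0 < a) (k : ℕ) :
    0 < Ring.choose (a + k - 1) k := by
  rw [Ring.choose_eq_smul, Polynomial.descPochhammer_smeval_eq_ascPochhammer,
    Polynomial.ascPochhammer_smeval_eq_eval, smul_eq_mul]
  have : a + k - 1 - k + 1 = a := by ring
  rw [this]
  exact mul_pos (by positivity) (ascPochhammer_pos k a ha)

noncomputable def invSqrtCoeff (k : ℕ) : ℝ := Ring.choose ((1 / 2 : ℝ) + k - 1) k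

theorem invSqrtCoeff_pos (k : ℕ) : 0 < invSqrtCoeff k :=
  Ring.choose_add_sub_one_pos one_half_pos k

theorem hasSum_one_div_sqrt_one_sub_sq {y : ℝ} (hy : |y| < 1) :
    HasSum (fun k => invSqrtCoeff k * y ^ (2 * k)) (1 / √(1 - y ^ 2)) := by
  have hy2 : y ^ 2 ∈ Metric.eball (0 : ℝ) 1 := by
    rw [Metric.mem_eball, edist_zero_right, enorm_eq_nnnorm, ← ENNReal.coe_one, ENNReal.coe_lt_coe,
      ← NNReal.coe_lt_coe]
    simpa [abs_lt, sq_abs] using (sq_lt_one_iff_abs_lt_one y).2 hy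
  have := (one_div_one_sub_rpow_hasFPowerSeriesOnBall_zero (1 / 2)).hasSum hy2
  simp only [FormalMultilinearSeries.ofScalars_apply_eq, smul_eq_mul, zero_add] at this
  rw [sqrt_eq_rpow]
  simpa [invSqrtCoeff, ← pow_mul] using this

noncomputable def arcsinCoeff (k : ℕ) : ℝ := invSqrtCoeff k / (2 * k + 1)

theorem arcsinCoeff_pos (k : ℕ) : 0 < arcsinCoeff k :=
  div_pos (invSqrtCoeff_pos k) (by positivity)

theorem abs_arcsinCoeff_mul_pow_le {y : ℝ} (hy : |y| ≤ 1) (k : ℕ) :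
    |arcsinCoeff k * y ^ (2 * k + 1)| ≤ invSqrtCoeff k * |y| ^ (2 * k) := by
  have hc := invSqrtCoeff_pos k
  rw [abs_mul, abs_of_pos (arcsinCoeff_pos k), abs_pow, pow_succ, arcsinCoeff, ← mul_assoc]
  refine mul_le_of_le_one_right (by positivity) hy |>.trans ?_
  gcongr
  exact div_le_self hc.le (by linarith [k.cast_nonneg (α := ℝ)])

theorem hasDerivAt_tsum_arcsinCoeff_mul_pow {y : ℝ} (hy : |y| < 1) :
    HasDerivAt (fun z => ∑' k, arcsinCoeff k * z ^ (2 * k + 1)) (1 / √(1 - y ^ 2)) y := by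
  set r := (|y| + 1) / 2 with hr_def
  have hr : |r| < 1 := by rw [abs_of_nonneg (by positivity)]; linarith
  have hyr : y ∈ Metric.ball 0 r := by rw [mem_ball_zero_iff, Real.norm_eq_abs]; linarith
  rw [← (hasSum_one_div_sqrt_one_sub_sq hy).tsum_eq]
  refine hasDerivAt_tsum_of_isPreconnected (g := fun k z => arcsinCoeff k * z ^ (2 * k + 1))
    (g' := fun k z => invSqrtCoeff k * z ^ (2 * k)) (hasSum_one_div_sqrt_one_sub_sq hr).summable
    Metric.isOpen_ball (convex_ball 0 r).isPreconnected (fun k z _ => ?_) (fun k z hz => ?_)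
    (Metric.mem_ball_self (by positivity)) (by simp [summable_zero]) hyr
  · refine ((hasDerivAt_pow (2 * k + 1) z).const_mul (arcsinCoeff k)).congr_deriv ?_
    rw [arcsinCoeff, Nat.add_sub_cancel]
    push_cast
    field_simp
  · have hc := invSqrtCoeff_pos k
    rw [mem_ball_zero_iff] at hz
    rw [norm_mul, norm_pow, Real.norm_of_nonneg hc.le, Real.norm_eq_abs]
    gcongr
    exact hz.le

theorem hasSum_arcsin {y : ℝ} (hy : |y| < 1) :
    HasSum (fun k => arcsinCoeff k * y ^ (2 * k + 1)) (arcsin y) := by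
  have hs : Summable (fun k => arcsinCoeff k * y ^ (2 * k + 1)) :=
    .of_norm_bounded (hasSum_one_div_sqrt_one_sub_sq (abs_abs y ▸ hy)).summable
      fun k => by simpa [abs_pow] using abs_arcsinCoeff_mul_pow_le hy.le k
  convert hs.hasSum
  have harcsin : ∀ z ∈ Metric.ball (0 : ℝ) 1, HasDerivAt arcsin (1 / √(1 - z ^ 2)) z :=
    fun z hz => by
      obtain ⟨h₁, h₂⟩ := abs_lt.1 (by simpa using hz : |z| < 1)
      simpa using hasDerivAt_arcsin h₁.ne' h₂.ne
  have hG : ∀ z ∈ Metric.ball (0 : ℝ) 1,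
      HasDerivAt (fun z => ∑' k, arcsinCoeff k * z ^ (2 * k + 1)) (1 / √(1 - z ^ 2)) z :=
    fun z hz => hasDerivAt_tsum_arcsinCoeff_mul_pow (by simpa using hz)
  exact Metric.isOpen_ball.eqOn_of_deriv_eq (convex_ball 0 1).isPreconnected
    (fun z hz => (harcsin z hz).differentiableAt.differentiableWithinAt)
    (fun z hz => (hG z hz).differentiableAt.differentiableWithinAt)
    (fun z hz => (harcsin z hz).deriv.trans (hG z hz).deriv.symm)
    (Metric.mem_ball_self one_pos) (by simp) (by simpa using hy)

namespace Matrix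

variable {ι 𝕜 : Type*} [Fintype ι] [RCLike 𝕜]

theorem PosSemidef.map_pow {A : Matrix ι ι 𝕜} (hA : A.PosSemidef) :
    ∀ p : ℕ, (A.map (· ^ p)).PosSemidef
  | 0 => by simpa [vecMulVec, map, Matrix.of] using posSemidef_vecMulVec_self_star (1 : ι → 𝕜)
  | p + 1 => by
    rw [show A.map (· ^ (p + 1)) = A.map (· ^ p) ⊙ A from ext fun i j => pow_succ (A i j) p]
    exact (hA.map_pow p).hadamard hA

theorem dotProduct_mulVec_self_eq_sum (A : Matrix ι ι ℝ) (t : ι → ℝ) :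
    t ⬝ᵥ A *ᵥ t = ∑ i, ∑ j, t i * t j * A i j := by
  simp only [dotProduct, mulVec, Finset.mul_sum]
  exact Finset.sum_congr rfl fun i _ => Finset.sum_congr rfl fun j _ => by ring

theorem posSemidef_iff_sum_mul_mul_nonneg {A : Matrix ι ι ℝ} :
    A.PosSemidef ↔ A.IsHermitian ∧ ∀ t : ι → ℝ, 0 ≤ ∑ i, ∑ j, t i * t j * A i j := by
  simp [posSemidef_iff_dotProduct_mulVec, dotProduct_mulVec_self_eq_sum]

theorem PosSemidef.map_of_hasSum {κ : Type*} {A : Matrix ι ι ℝ} (hA : A.PosSemidef)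
    {f : ℝ → ℝ} {a : κ → ℝ} (ha : ∀ k, 0 ≤ a k) (e : κ → ℕ)
    (hf : ∀ i j, HasSum (fun k => a k * A i j ^ e k) (f (A i j))) : (A.map f).PosSemidef := by
  refine posSemidef_iff_sum_mul_mul_nonneg.2 ⟨hA.isHermitian.map f fun _ => rfl, fun t => ?_⟩
  have hsum : HasSum (fun k => a k * ∑ i, ∑ j, t i * t j * A i j ^ e k)
      (∑ i, ∑ j, t i * t j * f (A i j)) := by
    simp only [Finset.mul_sum, mul_left_comm (a _)]
    exact hasSum_sum fun i _ => hasSum_sum fun j _ => (hf i j).mul_left _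
  exact hsum.nonneg fun k => mul_nonneg (ha k)
    ((posSemidef_iff_sum_mul_mul_nonneg.1 (hA.map_pow (e k))).2 t)

theorem PosSemidef.map_arcsin {A : Matrix ι ι ℝ} (hA : A.PosSemidef)
    (hA₁ : ∀ i j, |A i j| ≤ 1) : (A.map arcsin).PosSemidef := by
  refine posSemidef_iff_sum_mul_mul_nonneg.2 ⟨hA.isHermitian.map _ fun _ => rfl, fun t => ?_⟩
  set F : ℝ → ℝ := fun r => ∑ i, ∑ j, t i * t j * arcsin (r * A i j)
  have hF : Continuous F := by fun_prop
  have hF_nonneg : ∀ r ∈ Set.Ioo (0 : ℝ) 1, 0 ≤ F r := fun r hr => by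
    have hrA : ∀ i j, |(r • A) i j| < 1 := fun i j => by
      rw [smul_apply, smul_eq_mul, abs_mul, abs_of_pos hr.1]
      exact (mul_le_of_le_one_right hr.1.le (hA₁ i j)).trans_lt hr.2
    exact (posSemidef_iff_sum_mul_mul_nonneg.1 ((hA.smul hr.1.le).map_of_hasSum
      (fun k => (arcsinCoeff_pos k).le) _ fun i j => hasSum_arcsin (hrA i j))).2 t
  simpa [F] using ge_of_tendsto ((hF.tendsto 1).mono_left nhdsWithin_le_nhds)
    (Filter.eventually_of_mem (Ioo_mem_nhdsLT one_pos) hF_nonneg)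

end Matrix

theorem sphere_geodesic_dist_negative_type_general (n : ℕ)
    (m : ℕ) (x : Fin m → EuclideanSpace ℝ (Fin (n + 1)))
    (hx : ∀ i, ‖x i‖ = 1)
    (t : Fin m → ℝ) (ht : (∑ i, t i) = 0) :
    ∑ i, ∑ j, t i * t j * Real.arccos (inner ℝ (x i) (x j)) ≤ 0 := by
  have hgram : ∀ i j, |Matrix.gram ℝ x i j| ≤ 1 := fun i j => by
    simpa [hx] using abs_real_inner_le_norm (x i) (x j)
  have harcsin := (Matrix.posSemidef_iff_sum_mul_mul_nonneg.1
    ((Matrix.posSemidef_gram ℝ x).map_arcsin hgram)).2 t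
  simp only [Matrix.map_apply, Matrix.gram_apply] at harcsin
  have hconst : ∑ i, ∑ j, t i * t j * (π / 2) = 0 := by
    simp [← Finset.sum_mul, ← Finset.mul_sum, ht]
  calc ∑ i, ∑ j, t i * t j * arccos (inner ℝ (x i) (x j))
      = ∑ i, ∑ j, t i * t j * (π / 2) - ∑ i, ∑ j, t i * t j * arcsin (inner ℝ (x i) (x j)) := by
        simp only [arccos_eq_pi_div_two_sub_arcsin, mul_sub, Finset.sum_sub_distrib]
    _ ≤ 0 := by linarith

/-- The geodesic (great-circle) distance `d(x,y) = arccos⟨x,y⟩` on the unit sphere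
`Sⁿ` (`n ≥ 1`) is a kernel of negative type. -/
theorem sphere_geodesic_dist_negative_type (n : ℕ) (hn : 1 ≤ n)
    (m : ℕ) (x : Fin m → EuclideanSpace ℝ (Fin (n + 1)))
    (hx : ∀ i, ‖x i‖ = 1)
    (t : Fin m → ℝ) (ht : (∑ i, t i) = 0) :
    ∑ i, ∑ j, t i * t j * Real.arccos (inner ℝ (x i) (x j)) ≤ 0 :=
  sphere_geodesic_dist_negative_type_general n m x hx t ht
end

section
/- On the sphere Sⁿ with H_u = {z ∈ Sⁿ : ⟨z,u⟩ > 0} and Σ_x = {u ∈ Sⁿ : x ∈ H_u}, the surface measure σ(Σ_x △ Σ_y) is a positive constant multiple, depending only on n, of arccos⟨x,y⟩ for all x, y ∈ Sⁿ. -/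
open MeasureTheory Metric
open scoped RealInnerProductSpace

set_option maxHeartbeats 1000000

namespace SphereLune

variable {n : ℕ}

abbrev Esp (n : ℕ) := EuclideanSpace ℝ (Fin (n + 1))

/-- the lune -/
def lune (n : ℕ) (x y : Esp n) : Set (Esp n) :=
  symmDiff {u | ‖u‖ = 1 ∧ (0:ℝ) < inner ℝ x u} {u | ‖u‖ = 1 ∧ (0:ℝ) < inner ℝ y u}

lemma mem_lune {x y u : Esp n} :
    u ∈ lune n x y ↔ ‖u‖ = 1 ∧ ¬ ((0 < ⟪x, u⟫) ↔ (0 < ⟪y, u⟫)) := by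
  simp only [lune, Set.mem_symmDiff, Set.mem_setOf_eq]
  tauto

lemma measurableSet_lune (x y : Esp n) : MeasurableSet (lune n x y) := by
  have h : ∀ z : Esp n, MeasurableSet {u : Esp n | ‖u‖ = 1 ∧ (0:ℝ) < inner ℝ z u} := by
    intro z
    have h1 : {u : Esp n | ‖u‖ = 1 ∧ (0:ℝ) < inner ℝ z u}
        = (sphere (0 : Esp n) 1) ∩ {u : Esp n | (0:ℝ) < inner ℝ z u} := by
      ext u; simp [mem_sphere_zero_iff_norm]
    rw [h1]
    exact (isClosed_sphere.measurableSet).inter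
      (measurableSet_lt measurable_const ((Continuous.inner continuous_const continuous_id).measurable))
  exact (h x).symmDiff (h y)

lemma lune_subset_sphere (x y : Esp n) : lune n x y ⊆ sphere (0 : Esp n) 1 := by
  intro u hu
  rw [mem_lune] at hu
  simpa [mem_sphere_zero_iff_norm] using hu.1

lemma lune_triangle (x y z : Esp n) : lune n x z ⊆ lune n x y ∪ lune n y z := by
  intro u hu
  rw [mem_lune] at hu
  simp only [Set.mem_union, mem_lune]
  tauto

lemma lune_split {x y z : Esp n} {p q : ℝ} (hp : 0 < p) (hq : 0 < q)
    (hy : y = p • x + q • z) :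
    lune n x z = lune n x y ∪ lune n y z ∧ Disjoint (lune n x y) (lune n y z) := by
  have key : ∀ u : Esp n,
      ((0 < ⟪x, u⟫ → 0 < ⟪z, u⟫ → 0 < ⟪y, u⟫) ∧
       (⟪x, u⟫ ≤ 0 → ⟪z, u⟫ ≤ 0 → ⟪y, u⟫ ≤ 0)) := by
    intro u
    have hyu : ⟪y, u⟫ = p * ⟪x, u⟫ + q * ⟪z, u⟫ := by
      rw [hy, inner_add_left, real_inner_smul_left, real_inner_smul_left]
    constructor
    · intro h1 h2; nlinarith
    · intro h1 h2; nlinarith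
  constructor
  · ext u
    have h1 := (key u).1
    have h2 := (key u).2
    rw [← not_lt, ← not_lt, ← not_lt] at h2
    simp only [Set.mem_union, mem_lune]
    generalize hA : ((0:ℝ) < ⟪x, u⟫) = A at h1 h2 ⊢
    generalize hB : ((0:ℝ) < ⟪y, u⟫) = B at h1 h2 ⊢
    generalize hC : ((0:ℝ) < ⟪z, u⟫) = C at h1 h2 ⊢
    tauto
  · rw [Set.disjoint_left]
    intro u hu1 hu2
    have h1 := (key u).1
    have h2 := (key u).2
    rw [← not_lt, ← not_lt, ← not_lt] at h2
    rw [mem_lune] at hu1 hu2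
    generalize hA : ((0:ℝ) < ⟪x, u⟫) = A at h1 h2 hu1 hu2
    generalize hB : ((0:ℝ) < ⟪y, u⟫) = B at h1 h2 hu1 hu2
    generalize hC : ((0:ℝ) < ⟪z, u⟫) = C at h1 h2 hu1 hu2
    tauto


lemma lune_preimage (g : Esp n ≃ₗᵢ[ℝ] Esp n) (x y : Esp n) :
    lune n x y = ⇑g ⁻¹' lune n (g x) (g y) := by
  ext u
  simp only [Set.mem_preimage, mem_lune, g.norm_map, g.inner_map_map]

/-- map a pair of orthonormal vectors to the first two standard basis vectors -/
lemma exists_iso (hn : 1 ≤ n) {x w : Esp n} (hx : ‖x‖ = 1) (hw : ‖w‖ = 1)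
    (hxw : ⟪x, w⟫ = 0) :
    ∃ g : Esp n ≃ₗᵢ[ℝ] Esp n,
      g (EuclideanSpace.single 0 1) = x ∧ g (EuclideanSpace.single 1 1) = w := by
  classical
  have hn0 : n ≠ 0 := by omega
  have h10 : (1 : Fin (n+1)) ≠ 0 := by
    intro h
    have := congrArg Fin.val h
    simp [Fin.val_one'] at this
    omega
  set v : Fin (n+1) → Esp n := fun i => if i = 0 then x else w with hv
  have hon : Orthonormal ℝ (Set.restrict ({0, 1} : Set (Fin (n+1))) v) := by
    rw [orthonormal_iff_ite]
    rintro ⟨i, hi⟩ ⟨j, hj⟩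
    simp only [Set.mem_insert_iff, Set.mem_singleton_iff] at hi hj
    have hxx : ⟪x, x⟫ = 1 := by
      rw [real_inner_self_eq_norm_mul_norm, hx]; norm_num
    have hww : ⟪w, w⟫ = 1 := by
      rw [real_inner_self_eq_norm_mul_norm, hw]; norm_num
    have hwx : ⟪w, x⟫ = 0 := by rw [real_inner_comm]; exact hxw
    rcases hi with rfl | rfl <;> rcases hj with rfl | rfl <;>
      simp [Set.restrict, hv, h10, hn0, Subtype.ext_iff, hxx, hww, hxw, hwx, hx, hw]
  obtain ⟨b, hb⟩ := hon.exists_orthonormalBasis_extension_of_card_eq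
    (by simp [finrank_euclideanSpace]) (v := v)
  refine ⟨b.repr.symm, ?_, ?_⟩
  · have := b.repr_symm_single 0
    rw [this]
    have := hb 0 (by simp)
    simp [hv] at this
    exact this
  · have := b.repr_symm_single 1
    rw [this]
    have := hb 1 (by simp)
    simp [hv, h10] at this
    exact this

noncomputable def pt (x w : Esp n) (θ : ℝ) : Esp n :=
  Real.cos θ • x + Real.sin θ • w

lemma inner_pt_self {x w : Esp n} (hx : ‖x‖ = 1) (hxw : ⟪x, w⟫ = 0) (θ : ℝ) :
    ⟪x, pt x w θ⟫ = Real.cos θ := by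
  have hxx : ⟪x, x⟫ = 1 := by rw [real_inner_self_eq_norm_mul_norm, hx]; norm_num
  simp only [pt, inner_add_right, real_inner_smul_right, hxx, hxw]
  ring

lemma norm_pt {x w : Esp n} (hx : ‖x‖ = 1) (hw : ‖w‖ = 1) (hxw : ⟪x, w⟫ = 0) (θ : ℝ) :
    ‖pt x w θ‖ = 1 := by
  have hxx : ⟪x, x⟫ = 1 := by rw [real_inner_self_eq_norm_mul_norm, hx]; norm_num
  have hww : ⟪w, w⟫ = 1 := by rw [real_inner_self_eq_norm_mul_norm, hw]; norm_num
  have hwx : ⟪w, x⟫ = 0 := by rw [real_inner_comm]; exact hxw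
  have hself : ⟪pt x w θ, pt x w θ⟫ = 1 := by
    simp only [pt, inner_add_left, inner_add_right, real_inner_smul_left,
      real_inner_smul_right, hxx, hww, hxw, hwx]
    ring_nf
    nlinarith [Real.sin_sq_add_cos_sq θ]
  have h2 : ‖pt x w θ‖ * ‖pt x w θ‖ = 1 := by
    rw [← real_inner_self_eq_norm_mul_norm, hself]
  nlinarith [norm_nonneg (pt x w θ)]

noncomputable def wrot (x w : Esp n) (α : ℝ) : Esp n :=
  (-Real.sin α) • x + Real.cos α • w

lemma norm_wrot {x w : Esp n} (hx : ‖x‖ = 1) (hw : ‖w‖ = 1) (hxw : ⟪x, w⟫ = 0) (α : ℝ) :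
    ‖wrot x w α‖ = 1 := by
  have hxx : ⟪x, x⟫ = 1 := by rw [real_inner_self_eq_norm_mul_norm, hx]; norm_num
  have hww : ⟪w, w⟫ = 1 := by rw [real_inner_self_eq_norm_mul_norm, hw]; norm_num
  have hwx : ⟪w, x⟫ = 0 := by rw [real_inner_comm]; exact hxw
  have hself : ⟪wrot x w α, wrot x w α⟫ = 1 := by
    simp only [wrot, inner_add_left, inner_add_right, real_inner_smul_left,
      real_inner_smul_right, hxx, hww, hxw, hwx]
    ring_nf
    nlinarith [Real.sin_sq_add_cos_sq α]
  have h2 : ‖wrot x w α‖ * ‖wrot x w α‖ = 1 := by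
    rw [← real_inner_self_eq_norm_mul_norm, hself]
  nlinarith [norm_nonneg (wrot x w α)]

lemma inner_pt_wrot {x w : Esp n} (hx : ‖x‖ = 1) (hw : ‖w‖ = 1) (hxw : ⟪x, w⟫ = 0) (α : ℝ) :
    ⟪pt x w α, wrot x w α⟫ = 0 := by
  have hxx : ⟪x, x⟫ = 1 := by rw [real_inner_self_eq_norm_mul_norm, hx]; norm_num
  have hww : ⟪w, w⟫ = 1 := by rw [real_inner_self_eq_norm_mul_norm, hw]; norm_num
  have hwx : ⟪w, x⟫ = 0 := by rw [real_inner_comm]; exact hxw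
  simp only [pt, wrot, inner_add_left, inner_add_right, real_inner_smul_left,
    real_inner_smul_right, hxx, hww, hxw, hwx]
  ring

lemma pt_add (x w : Esp n) (α β : ℝ) :
    pt x w (α + β) = pt (pt x w α) (wrot x w α) β := by
  simp only [pt, wrot, Real.cos_add, Real.sin_add]
  module

lemma pt_zero (x w : Esp n) : pt x w 0 = x := by
  simp [pt]

lemma pt_pi_div_two (x w : Esp n) : pt x w (Real.pi / 2) = w := by
  simp [pt]

lemma pt_neg_base (x w : Esp n) (α : ℝ) : pt x w α = pt (-x) w (Real.pi - α) := by
  simp only [pt, Real.cos_pi_sub, Real.sin_pi_sub]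
  module


noncomputable def ee (n : ℕ) (i : Fin (n + 1)) : Esp n := EuclideanSpace.single i 1

lemma norm_ee (i : Fin (n + 1)) : ‖ee n i‖ = 1 := by
  simp [ee, EuclideanSpace.norm_single]

lemma inner_ee {i j : Fin (n + 1)} (hij : i ≠ j) : ⟪ee n i, ee n j⟫ = 0 := by
  simp [ee, EuclideanSpace.inner_single_left, EuclideanSpace.single_apply, hij.symm]

variable (σ : Measure (Esp n))

lemma lune_measure_congr (hinv : ∀ g : Esp n ≃ₗᵢ[ℝ] Esp n, σ.map g = σ)
    (g : Esp n ≃ₗᵢ[ℝ] Esp n) (x y : Esp n) :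
    σ (lune n x y) = σ (lune n (g x) (g y)) := by
  rw [lune_preimage g x y,
    ← Measure.map_apply g.continuous.measurable (measurableSet_lune _ _), hinv g]

lemma lune_measure_ne_top (hfin : σ (sphere (0 : Esp n) 1) ≠ ⊤) (x y : Esp n) :
    σ (lune n x y) ≠ ⊤ :=
  ne_top_of_le_ne_top hfin (measure_mono (lune_subset_sphere x y))

noncomputable def gfun (σ : Measure (Esp n)) (θ : ℝ) : ℝ :=
  (σ (lune n (ee n 0) (pt (ee n 0) (ee n 1) θ))).toReal

lemma one_ne_zero_fin (hn : 1 ≤ n) : (1 : Fin (n+1)) ≠ 0 := by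
  intro h
  have := congrArg Fin.val h
  simp [Fin.val_one'] at this
  omega

lemma gfun_nonneg (θ : ℝ) : 0 ≤ gfun σ θ := ENNReal.toReal_nonneg

lemma gfun_hom (hn : 1 ≤ n) (hinv : ∀ g : Esp n ≃ₗᵢ[ℝ] Esp n, σ.map g = σ)
    {x w : Esp n} (hx : ‖x‖ = 1) (hw : ‖w‖ = 1) (hxw : ⟪x, w⟫ = 0) (θ : ℝ) :
    (σ (lune n x (pt x w θ))).toReal = gfun σ θ := by
  obtain ⟨g, hg0, hg1⟩ := exists_iso hn hx hw hxw
  have hgpt : g (pt (ee n 0) (ee n 1) θ) = pt x w θ := by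
    simp only [pt, ee, map_add, LinearIsometryEquiv.map_smul, hg0, hg1]
  have key := lune_measure_congr σ hinv g (ee n 0) (pt (ee n 0) (ee n 1) θ)
  rw [show g (ee n 0) = x from hg0, hgpt] at key
  rw [gfun, ← key]

lemma lune_self (x : Esp n) : lune n x x = ∅ := by
  simp [lune, symmDiff_self]

lemma gfun_zero : gfun σ 0 = 0 := by
  rw [gfun, pt_zero, lune_self]
  simp

lemma gfun_add (hn : 1 ≤ n) (hinv : ∀ g : Esp n ≃ₗᵢ[ℝ] Esp n, σ.map g = σ)
    (hfin : σ (sphere (0 : Esp n) 1) ≠ ⊤) {α β : ℝ} (hα : 0 < α) (hβ : 0 < β)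
    (hαβ : α + β < Real.pi) : gfun σ (α + β) = gfun σ α + gfun σ β := by
  have hsαβ : 0 < Real.sin (α + β) := Real.sin_pos_of_pos_of_lt_pi (by linarith) hαβ
  have hsα : 0 < Real.sin α := Real.sin_pos_of_pos_of_lt_pi hα (by linarith)
  have hsβ : 0 < Real.sin β := Real.sin_pos_of_pos_of_lt_pi hβ (by linarith)
  set p := Real.sin β / Real.sin (α + β) with hpdef
  set q := Real.sin α / Real.sin (α + β) with hqdef
  have hp : 0 < p := div_pos hsβ hsαβ
  have hq : 0 < q := div_pos hsα hsαβ
  have h2 : Real.sin α = q * Real.sin (α + β) := by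
    rw [hqdef]; field_simp
  have h1 : Real.cos α = p + q * Real.cos (α + β) := by
    have hs : Real.sin β = Real.sin (α+β) * Real.cos α - Real.cos (α+β) * Real.sin α := by
      have h := Real.sin_sub (α+β) α
      simp only [add_sub_cancel_left] at h
      linarith
    rw [hpdef, hqdef]
    field_simp
    nlinarith [hs]
  have hy : pt (ee n 0) (ee n 1) α = p • (ee n 0) + q • pt (ee n 0) (ee n 1) (α + β) := by
    calc pt (ee n 0) (ee n 1) α
        = (p + q * Real.cos (α+β)) • (ee n 0) + (q * Real.sin (α+β)) • (ee n 1) := by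
          rw [pt, ← h1, ← h2]
      _ = p • (ee n 0) + q • pt (ee n 0) (ee n 1) (α+β) := by
          simp only [pt]; module
  obtain ⟨hunion, hdisj⟩ := lune_split hp hq hy
  have hμ : σ (lune n (ee n 0) (pt (ee n 0) (ee n 1) (α+β)))
      = σ (lune n (ee n 0) (pt (ee n 0) (ee n 1) α))
        + σ (lune n (pt (ee n 0) (ee n 1) α) (pt (ee n 0) (ee n 1) (α+β))) := by
    rw [hunion, measure_union hdisj (measurableSet_lune _ _)]
  have he0 : ‖ee n 0‖ = 1 := norm_ee 0
  have he1 : ‖ee n 1‖ = 1 := norm_ee 1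
  have he01 : ⟪ee n 0, ee n 1⟫ = 0 := inner_ee (Ne.symm (one_ne_zero_fin hn))
  have hsecond : (σ (lune n (pt (ee n 0) (ee n 1) α) (pt (ee n 0) (ee n 1) (α+β)))).toReal
      = gfun σ β := by
    have h := gfun_hom σ hn hinv (norm_pt he0 he1 he01 α) (norm_wrot he0 he1 he01 α)
      (inner_pt_wrot he0 he1 he01 α) β
    rwa [← pt_add] at h
  have hfin1 := lune_measure_ne_top σ hfin (ee n 0) (pt (ee n 0) (ee n 1) α)
  have hfin2 := lune_measure_ne_top σ hfin (pt (ee n 0) (ee n 1) α) (pt (ee n 0) (ee n 1) (α+β))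
  calc gfun σ (α + β)
      = (σ (lune n (ee n 0) (pt (ee n 0) (ee n 1) α))
        + σ (lune n (pt (ee n 0) (ee n 1) α) (pt (ee n 0) (ee n 1) (α+β)))).toReal := by
        rw [gfun, hμ]
    _ = gfun σ α + gfun σ β := by
        rw [ENNReal.toReal_add hfin1 hfin2, gfun, hsecond]


variable (hn : 1 ≤ n) (hinv : ∀ g : Esp n ≃ₗᵢ[ℝ] Esp n, σ.map g = σ)
    (hfin : σ (sphere (0 : Esp n) 1) ≠ ⊤)

include hn hinv hfin

lemma gfun_iter (δ : ℝ) (hδ : 0 < δ) :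
    ∀ j : ℕ, (j : ℝ) * δ < Real.pi → gfun σ ((j : ℝ) * δ) = (j : ℝ) * gfun σ δ := by
  intro j
  induction j with
  | zero => intro _; simp [gfun_zero]
  | succ j ih =>
    intro hj
    rcases Nat.eq_zero_or_pos j with rfl | hjpos
    · norm_num
    · have hj1 : (1 : ℝ) ≤ (j : ℝ) := by exact_mod_cast hjpos
      have hcast : ((j + 1 : ℕ) : ℝ) * δ = (j : ℝ) * δ + δ := by push_cast; ring
      have hjδ : (j : ℝ) * δ < Real.pi := by
        rw [hcast] at hj; linarith
      have hsum : (j : ℝ) * δ + δ < Real.pi := by rw [hcast] at hj; linarith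
      have h := gfun_add σ hn hinv hfin (by positivity) hδ hsum
      rw [hcast, h, ih hjδ]
      push_cast; ring

lemma gfun_rat {m N : ℕ} (hm : 0 < m) (hmN : m < N) :
    gfun σ (((m : ℝ) / N) * Real.pi) = ((m : ℝ) / N) * (2 * gfun σ (Real.pi / 2)) := by
  have hπ := Real.pi_pos
  have hN : (0 : ℝ) < N := by exact_mod_cast hm.trans hmN
  set δ := Real.pi / (2 * N) with hδdef
  have hδ : 0 < δ := by positivity
  have half : gfun σ (Real.pi / 2) = (N : ℝ) * gfun σ δ := by
    have harg : (N : ℝ) * δ = Real.pi / 2 := by rw [hδdef]; field_simp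
    have := gfun_iter σ hn hinv hfin δ hδ N (by rw [harg]; linarith)
    rw [harg] at this
    exact this
  have main : gfun σ (((m : ℝ) / N) * Real.pi) = ((2 * m : ℕ) : ℝ) * gfun σ δ := by
    have harg : ((2 * m : ℕ) : ℝ) * δ = ((m : ℝ) / N) * Real.pi := by
      rw [hδdef]; push_cast; field_simp
    have hlt : ((2 * m : ℕ) : ℝ) * δ < Real.pi := by
      rw [harg]
      have : (m : ℝ) / N < 1 := by
        rw [div_lt_one hN]; exact_mod_cast hmN
      nlinarith
    have := gfun_iter σ hn hinv hfin δ hδ (2 * m) hlt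
    rw [harg] at this
    exact this
  rw [main, half]
  push_cast
  field_simp

lemma gfun_mono {a b : ℝ} (ha : 0 ≤ a) (hab : a ≤ b) (hb : b < Real.pi) :
    gfun σ a ≤ gfun σ b := by
  rcases eq_or_lt_of_le ha with ha0 | ha0
  · rw [← ha0, gfun_zero]; exact gfun_nonneg σ b
  rcases eq_or_lt_of_le hab with rfl | hab'
  · exact le_refl _
  · have h := gfun_add σ hn hinv hfin ha0 (show 0 < b - a by linarith)
      (show a + (b - a) < Real.pi by linarith)
    have he : a + (b - a) = b := by ring
    rw [he] at h
    have := gfun_nonneg σ (b - a)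
    linarith

lemma gfun_le {θ : ℝ} (hθ : 0 < θ) (hθπ : θ < Real.pi) :
    gfun σ θ ≤ 2 * gfun σ (Real.pi / 2) := by
  have hπ := Real.pi_pos
  have h := gfun_add σ hn hinv hfin (show 0 < θ/2 by linarith) (show 0 < θ/2 by linarith)
    (show θ/2 + θ/2 < Real.pi by linarith)
  have he : θ/2 + θ/2 = θ := by ring
  rw [he] at h
  have hmon := gfun_mono σ hn hinv hfin (show (0:ℝ) ≤ θ/2 by linarith)
    (show θ/2 ≤ Real.pi/2 by linarith) (show Real.pi/2 < Real.pi by linarith)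
  linarith

lemma gfun_linear {θ : ℝ} (hθ : 0 < θ) (hθπ : θ < Real.pi) :
    gfun σ θ = θ / Real.pi * (2 * gfun σ (Real.pi / 2)) := by
  have hπ := Real.pi_pos
  set G := 2 * gfun σ (Real.pi / 2) with hGdef
  have hG0 : 0 ≤ G := by
    have := gfun_nonneg σ (Real.pi / 2); rw [hGdef]; linarith
  have key : ∀ N : ℕ, 0 < N → |gfun σ θ - θ / Real.pi * G| ≤ G / N := by
    intro N hN
    have hNR : (0:ℝ) < N := by exact_mod_cast hN
    set m := Nat.floor ((N : ℝ) * θ / Real.pi) with hmdef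
    have hfl : (m : ℝ) ≤ (N : ℝ) * θ / Real.pi := Nat.floor_le (by positivity)
    have hfl2 : (N : ℝ) * θ / Real.pi < (m : ℝ) + 1 := Nat.lt_floor_add_one _
    rw [le_div_iff₀ hπ] at hfl
    rw [div_lt_iff₀ hπ] at hfl2
    have hmN : m < N := by
      have h1 : (m : ℝ) * Real.pi < (N:ℝ) * Real.pi := by nlinarith
      have h2 : (m : ℝ) < (N:ℝ) := by nlinarith
      exact_mod_cast h2
    have e2 : (m : ℝ) / N ≤ θ / Real.pi := by
      rw [div_le_div_iff₀ hNR hπ]; linarith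
    have e3 : θ / Real.pi ≤ ((m : ℝ) + 1) / N := by
      rw [div_le_div_iff₀ hπ hNR]; linarith
    have hlow : θ / Real.pi * G - G / N ≤ gfun σ θ := by
      rcases Nat.eq_zero_or_pos m with hm0 | hmpos
      · have h2 : θ / Real.pi ≤ 1 / N := by
          rw [hm0] at e3; simpa using e3
        have hg := gfun_nonneg σ θ
        have e6 : (1/(N:ℝ))*G = G/N := by ring
        nlinarith [mul_le_mul_of_nonneg_right h2 hG0]
      · have h1 := gfun_rat σ hn hinv hfin hmpos hmN
        have h2 : ((m : ℝ) / N) * Real.pi ≤ θ := by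
          rw [div_mul_eq_mul_div, div_le_iff₀ hNR]; linarith
        have hmon := gfun_mono σ hn hinv hfin (by positivity) h2 hθπ
        rw [h1] at hmon
        have e4 : ((m:ℝ)+1)/N * G = (m:ℝ)/N * G + G/N := by ring
        nlinarith [mul_le_mul_of_nonneg_right e3 hG0]
    have hup : gfun σ θ ≤ θ / Real.pi * G + G / N := by
      by_cases hc : m + 1 < N
      · have h1 := gfun_rat σ hn hinv hfin (Nat.succ_pos m) hc
        push_cast at h1
        have h2 : θ ≤ (((m:ℝ) + 1) / N) * Real.pi := by
          rw [div_mul_eq_mul_div, le_div_iff₀ hNR]; linarith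
        have h3 : (((m:ℝ) + 1) / N) * Real.pi < Real.pi := by
          have : ((m:ℝ) + 1) / N < 1 := by
            rw [div_lt_one hNR]; push_cast; exact_mod_cast (by exact_mod_cast hc : ((m+1:ℕ):ℝ) < N)
          nlinarith
        have hmon := gfun_mono σ hn hinv hfin (le_of_lt hθ) h2 h3
        rw [h1] at hmon
        have e7 : (((m:ℝ)+1)/N)*G = (m:ℝ)/N*G + G/N := by ring
        nlinarith [mul_le_mul_of_nonneg_right e2 hG0]
      · have hmeq : m = N - 1 := by omega
        have hmR : (m : ℝ) = (N : ℝ) - 1 := by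
          rw [hmeq]; push_cast [Nat.cast_sub hN]; ring
        have e5 : 1 - 1/(N:ℝ) ≤ θ / Real.pi := by
          rw [hmR] at e2
          have : ((N:ℝ) - 1)/N = 1 - 1/N := by field_simp
          linarith [this ▸ e2]
        have hub := gfun_le σ hn hinv hfin hθ hθπ
        rw [← hGdef] at hub
        have e8 : (1 - 1/(N:ℝ))*G = G - G/N := by ring
        nlinarith [mul_le_mul_of_nonneg_right e5 hG0]
    rw [abs_le]; constructor <;> linarith
  by_contra hne'
  have hd : gfun σ θ - θ / Real.pi * G ≠ 0 := sub_ne_zero.mpr hne'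
  have habs : 0 < |gfun σ θ - θ / Real.pi * G| := abs_pos.mpr hd
  obtain ⟨N, hNgt⟩ := exists_nat_gt (G / |gfun σ θ - θ / Real.pi * G|)
  have hN0R : (0:ℝ) < N := lt_of_le_of_lt (div_nonneg hG0 (abs_nonneg _)) hNgt
  have hN0 : 0 < N := by exact_mod_cast hN0R
  have hkey := key N hN0
  have hGN : G / (N:ℝ) < |gfun σ θ - θ / Real.pi * G| := by
    rw [div_lt_iff₀ hN0R]
    have := (div_lt_iff₀ habs).mp hNgt
    nlinarith
  linarith


lemma lune_neg_measure {x w : Esp n} (hx : ‖x‖ = 1) (hw : ‖w‖ = 1) (hxw : ⟪x, w⟫ = 0) :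
    (σ (lune n x (-x))).toReal = 2 * gfun σ (Real.pi / 2) := by
  have hπ := Real.pi_pos
  set G := 2 * gfun σ (Real.pi / 2) with hGdef
  have hxneg : ‖-x‖ = 1 := by simpa using hx
  have hwnegx : ⟪w, -x⟫ = 0 := by
    rw [inner_neg_right, real_inner_comm, hxw, neg_zero]
  have hnegxw : ⟪-x, w⟫ = 0 := by rw [inner_neg_left, hxw, neg_zero]
  have hA : (σ (lune n x w)).toReal = gfun σ (Real.pi/2) := by
    have h := gfun_hom σ hn hinv hx hw hxw (Real.pi/2)
    rwa [pt_pi_div_two] at h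
  have hB : (σ (lune n w (-x))).toReal = gfun σ (Real.pi/2) := by
    have h := gfun_hom σ hn hinv hw hxneg hwnegx (Real.pi/2)
    rwa [pt_pi_div_two] at h
  have f1 := lune_measure_ne_top σ hfin x (-x)
  have f2 := lune_measure_ne_top σ hfin x w
  have f3 := lune_measure_ne_top σ hfin w (-x)
  have hup : (σ (lune n x (-x))).toReal ≤ G := by
    have hsub : σ (lune n x (-x)) ≤ σ (lune n x w) + σ (lune n w (-x)) :=
      (measure_mono (lune_triangle x w (-x))).trans (measure_union_le _ _)
    have h1 : (σ (lune n x (-x))).toReal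
        ≤ (σ (lune n x w) + σ (lune n w (-x))).toReal :=
      ENNReal.toReal_mono (ENNReal.add_ne_top.mpr ⟨f2, f3⟩) hsub
    rw [ENNReal.toReal_add f2 f3, hA, hB] at h1
    rw [hGdef]; linarith
  have hlow : ∀ α : ℝ, 0 < α → α < Real.pi →
      gfun σ α ≤ (σ (lune n x (-x))).toReal + gfun σ (Real.pi - α) := by
    intro α hα hαπ
    have hC : (σ (lune n x (pt x w α))).toReal = gfun σ α := gfun_hom σ hn hinv hx hw hxw α
    have hD : (σ (lune n (-x) (pt x w α))).toReal = gfun σ (Real.pi - α) := by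
      have h := gfun_hom σ hn hinv hxneg hw hnegxw (Real.pi - α)
      rwa [← pt_neg_base] at h
    have hsub : σ (lune n x (pt x w α)) ≤ σ (lune n x (-x)) + σ (lune n (-x) (pt x w α)) :=
      (measure_mono (lune_triangle x (-x) (pt x w α))).trans (measure_union_le _ _)
    have f4 := lune_measure_ne_top σ hfin (-x) (pt x w α)
    have h1 : (σ (lune n x (pt x w α))).toReal
        ≤ (σ (lune n x (-x)) + σ (lune n (-x) (pt x w α))).toReal :=
      ENNReal.toReal_mono (ENNReal.add_ne_top.mpr ⟨f1, f4⟩) hsub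
    rw [ENNReal.toReal_add f1 f4, hC, hD] at h1
    exact h1
  set L := (σ (lune n x (-x))).toReal with hLdef
  have hL0 : (0:ℝ) ≤ L := ENNReal.toReal_nonneg
  have hG0 : (0:ℝ) ≤ G := by
    have := gfun_nonneg σ (Real.pi / 2); rw [hGdef]; linarith
  refine le_antisymm hup ?_
  by_contra hlt
  push_neg at hlt
  have hGpos : 0 < G := lt_of_le_of_lt hL0 hlt
  set s := (L + G) / (2 * G) with hsdef
  have hs1 : s < 1 := by rw [hsdef, div_lt_one (by linarith)]; linarith
  have hs0 : 0 < s := by rw [hsdef]; positivity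
  set α := Real.pi * ((s + 1) / 2) with hαdef
  have hα0 : 0 < α := by rw [hαdef]; positivity
  have hαπ : α < Real.pi := by
    rw [hαdef]; nlinarith
  have h1 := hlow α hα0 hαπ
  rw [gfun_linear σ hn hinv hfin hα0 hαπ,
      gfun_linear σ hn hinv hfin (by linarith : (0:ℝ) < Real.pi - α) (by linarith)] at h1
  rw [← hGdef] at h1
  have e1 : α / Real.pi = (s + 1) / 2 := by
    rw [hαdef]; field_simp
  have e2 : (Real.pi - α) / Real.pi = 1 - (s + 1) / 2 := by
    rw [hαdef]; field_simp
  rw [e1, e2] at h1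
  have e3 : s * G = (L + G) / 2 := by
    rw [hsdef]; field_simp
  nlinarith

omit hn hinv hfin in
lemma exists_unit_orth (hn : 1 ≤ n) {x : Esp n} (hx : ‖x‖ = 1) :
    ∃ w : Esp n, ‖w‖ = 1 ∧ ⟪x, w⟫ = 0 := by
  classical
  have h10 := one_ne_zero_fin hn
  set v : Fin (n+1) → Esp n := fun _ => x with hv
  have hon : Orthonormal ℝ (Set.restrict ({0} : Set (Fin (n+1))) v) := by
    rw [orthonormal_iff_ite]
    rintro ⟨i, hi⟩ ⟨j, hj⟩
    simp only [Set.mem_singleton_iff] at hi hj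
    subst hi; subst hj
    have hxx : ⟪x, x⟫ = 1 := by
      rw [real_inner_self_eq_norm_mul_norm, hx]; norm_num
    simp [Set.restrict, hv, hxx, hx]
  obtain ⟨b, hb⟩ := hon.exists_orthonormalBasis_extension_of_card_eq
    (by simp [finrank_euclideanSpace]) (v := v)
  have hb0 : b 0 = x := by simpa [hv] using hb 0 (by simp)
  refine ⟨b 1, b.orthonormal.1 1, ?_⟩
  rw [← hb0]
  exact b.orthonormal.2 (Ne.symm h10)

end SphereLune

open SphereLune in
/-- On the sphere `Sⁿ`, with `H_u = {z ∈ Sⁿ : ⟨z,u⟩ > 0}` and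
`Σ_x = {u ∈ Sⁿ : x ∈ H_u}`, the surface measure of `Σ_x △ Σ_y` is a positive
constant (depending only on `n` and the normalization of the surface measure)
multiple of the geodesic distance `arccos⟨x,y⟩`.  Here `σ` denotes the
rotation-invariant surface measure on `Sⁿ`: a nonzero finite rotation-invariant
measure concentrated on the sphere. -/
theorem sphere_symmDiff_measure_eq_const_mul_dist (n : ℕ) (hn : 1 ≤ n)
    (σ : Measure (EuclideanSpace ℝ (Fin (n + 1))))
    (hinv : ∀ g : EuclideanSpace ℝ (Fin (n + 1)) ≃ₗᵢ[ℝ]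
        EuclideanSpace ℝ (Fin (n + 1)), σ.map g = σ)
    (hsupp : σ (sphere (0 : EuclideanSpace ℝ (Fin (n + 1))) 1)ᶜ = 0)
    (hne : σ (sphere (0 : EuclideanSpace ℝ (Fin (n + 1))) 1) ≠ 0)
    (hfin : σ (sphere (0 : EuclideanSpace ℝ (Fin (n + 1))) 1) ≠ ⊤) :
    ∃ k : ℝ, 0 < k ∧ ∀ x y : EuclideanSpace ℝ (Fin (n + 1)),
      ‖x‖ = 1 → ‖y‖ = 1 →
      (σ (symmDiff {u | ‖u‖ = 1 ∧ (0:ℝ) < inner ℝ x u}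
        {u | ‖u‖ = 1 ∧ (0:ℝ) < inner ℝ y u})).toReal =
        k * Real.arccos (inner ℝ x y) := by
  classical
  have hπ := Real.pi_pos
  set G := 2 * gfun σ (Real.pi / 2) with hGdef
  have hG0 : (0:ℝ) ≤ G := by
    have := gfun_nonneg σ (Real.pi/2); rw [hGdef]; linarith
  have hGpos : 0 < G := by
    rcases eq_or_lt_of_le hG0 with hG | hG
    · exfalso
      have hnull : ∀ i : Fin (n+1),
          σ (lune n (EuclideanSpace.single i 1) (-(EuclideanSpace.single i 1))) = 0 := by
        intro i
        have hxi : ‖(EuclideanSpace.single i (1:ℝ) : Esp n)‖ = 1 := by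
          simp [EuclideanSpace.norm_single]
        obtain ⟨w, hw, hxw⟩ := exists_unit_orth hn hxi
        have h := lune_neg_measure σ hn hinv hfin hxi hw hxw
        rw [← hGdef, ← hG] at h
        have hf := lune_measure_ne_top σ hfin (EuclideanSpace.single i 1)
          (-(EuclideanSpace.single i 1))
        rcases (ENNReal.toReal_eq_zero_iff _).mp h with h0 | htop
        · exact h0
        · exact absurd htop hf
      have hcover : sphere (0 : Esp n) 1 ⊆
          ⋃ i, lune n (EuclideanSpace.single i 1) (-(EuclideanSpace.single i 1)) := by
        intro u hu
        rw [mem_sphere_zero_iff_norm] at hu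
        have hex : ∃ i, u i ≠ 0 := by
          by_contra hall
          push_neg at hall
          rw [EuclideanSpace.norm_eq] at hu
          simp [hall] at hu
        obtain ⟨i, hi⟩ := hex
        refine Set.mem_iUnion.mpr ⟨i, ?_⟩
        rw [mem_lune]
        refine ⟨hu, ?_⟩
        have h1 : ⟪(EuclideanSpace.single i (1:ℝ) : Esp n), u⟫ = u i := by
          simp [EuclideanSpace.inner_single_left]
        have h2 : ⟪-(EuclideanSpace.single i (1:ℝ) : Esp n), u⟫ = -(u i) := by
          rw [inner_neg_left, h1]
        rw [h1, h2]
        intro hiff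
        rcases Ne.lt_or_gt hi with hlt | hlt
        · have := hiff.mpr (by linarith); linarith
        · have := hiff.mp hlt; linarith
      exact hne (measure_mono_null hcover (measure_iUnion_null fun i => hnull i))
    · exact hG
  refine ⟨G / Real.pi, div_pos hGpos hπ, ?_⟩
  intro x y hx hy
  show (σ (lune n x y)).toReal = G / Real.pi * Real.arccos (inner ℝ x y)
  have hxx : ⟪x, x⟫ = 1 := by rw [real_inner_self_eq_norm_mul_norm, hx]; norm_num
  have hyy : ⟪y, y⟫ = 1 := by rw [real_inner_self_eq_norm_mul_norm, hy]; norm_num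
  have habs : |(inner ℝ x y : ℝ)| ≤ 1 := by
    have := abs_real_inner_le_norm x y
    rwa [hx, hy, one_mul] at this
  have hle : (inner ℝ x y : ℝ) ≤ 1 := (abs_le.mp habs).2
  have hge : (-1:ℝ) ≤ inner ℝ x y := (abs_le.mp habs).1
  by_cases hxy : y = x
  · rw [hxy, lune_self, hxx, Real.arccos_one]
    simp
  by_cases hyneg : y = -x
  · obtain ⟨w, hw, hxw⟩ := exists_unit_orth hn hx
    rw [hyneg, lune_neg_measure σ hn hinv hfin hx hw hxw, ← hGdef]
    have hinner : (inner ℝ x (-x) : ℝ) = -1 := by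
      rw [inner_neg_right, hxx]
    rw [hinner, Real.arccos_neg_one]
    field_simp
  · have ht1 : (inner ℝ x y : ℝ) < 1 := by
      rcases lt_or_eq_of_le hle with h | h
      · exact h
      · exact absurd ((inner_eq_one_iff_of_norm_eq_one hx hy).mp h).symm hxy
    have ht2 : (-1:ℝ) < inner ℝ x y := by
      rcases lt_or_eq_of_le hge with h | h
      · exact h
      · exfalso
        have hny : ‖-y‖ = 1 := by simpa using hy
        have h1 : (inner ℝ x (-y) : ℝ) = 1 := by
          rw [inner_neg_right, ← h]; norm_num
        have hxy' := (inner_eq_one_iff_of_norm_eq_one hx hny).mp h1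
        exact hyneg (by rw [hxy']; simp)
    set t : ℝ := inner ℝ x y with htdef
    have hyx : ⟪y, x⟫ = t := by rw [real_inner_comm, ← htdef]
    set v := y - t • x with hvdef
    have hv2 : ⟪v, v⟫ = 1 - t^2 := by
      rw [hvdef]
      simp only [inner_sub_left, inner_sub_right, real_inner_smul_left, real_inner_smul_right,
        hxx, hyy, hyx]
      rw [← htdef]
      ring
    have hvpos : (0:ℝ) < 1 - t^2 := by nlinarith
    have hvnorm : ‖v‖ = Real.sqrt (1 - t^2) := by
      have h1 : Real.sqrt (1 - t^2) = Real.sqrt (‖v‖ * ‖v‖) := by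
        rw [← hv2, real_inner_self_eq_norm_mul_norm]
      rw [h1, Real.sqrt_mul_self (norm_nonneg v)]
    have hvne : ‖v‖ ≠ 0 := by rw [hvnorm]; exact (Real.sqrt_pos.mpr hvpos).ne'
    set w := ‖v‖⁻¹ • v with hwdef
    have hwnorm : ‖w‖ = 1 := by
      rw [hwdef, norm_smul, norm_inv, norm_norm, inv_mul_cancel₀ hvne]
    have hxv : ⟪x, v⟫ = 0 := by
      rw [hvdef]
      simp only [inner_sub_right, real_inner_smul_right, hxx]
      rw [← htdef]; ring
    have hxw : ⟪x, w⟫ = 0 := by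
      rw [hwdef, real_inner_smul_right, hxv, mul_zero]
    have hcos : Real.cos (Real.arccos t) = t := Real.cos_arccos hge hle
    have hsin : Real.sin (Real.arccos t) = Real.sqrt (1 - t^2) := Real.sin_arccos t
    have hy' : y = pt x w (Real.arccos t) := by
      rw [pt, hcos, hsin, ← hvnorm, hwdef, smul_smul, mul_inv_cancel₀ hvne, one_smul, hvdef]
      module
    have hθ0 : 0 < Real.arccos t := Real.arccos_pos.mpr ht1
    have hθπ : Real.arccos t < Real.pi := by
      rcases lt_or_eq_of_le (Real.arccos_le_pi t) with h | h
      · exact h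
      · exfalso
        have := Real.arccos_eq_pi.mp h
        linarith
    rw [hy', gfun_hom σ hn hinv hx hwnorm hxw, gfun_linear σ hn hinv hfin hθ0 hθπ, ← hGdef]
    ring
end

section
/- Classical Crofton formula in ℝⁿ: for x, y ∈ ℝⁿ, the Euclidean distance |x−y| equals a fixed positive constant times the measure, with respect to the rigid-motion-invariant measure on the space of affine hyperplanes, of the set of hyperplanes meeting the segment [x,y]. -/
/-!
A hyperplane `{z : ⟪z, u⟫ = t}` with `‖u‖ = 1` meets `[x, y]` exactly when `t` lies between
`⟪x, u⟫` and `⟪y, u⟫`, so integrating over `t` first gives `∫ |⟪x - y, u⟫| dσ(u)`. Since `σ` is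
invariant under every linear isometry, which acts transitively on each sphere, this integral is
`‖x - y‖` times the same integral for a fixed unit vector. That constant is finite because `σ` is
finite and carried by the unit sphere, and positive because otherwise `σ`-almost every `u` would be
orthogonal to a whole basis.
-/

open MeasureTheory Metric Set
open scoped ENNReal RealInnerProductSpace

variable {E : Type*} [NormedAddCommGroup E] [InnerProductSpace ℝ E]

theorem exists_linearIsometryEquiv_apply_eq {a b : E} (h : ‖a‖ = ‖b‖) :
    ∃ g : E ≃ₗᵢ[ℝ] E, g a = b :=
  ⟨Submodule.reflection (ℝ ∙ (a - b))ᗮ, Submodule.reflection_sub h⟩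

theorem image_inner_segment (x y u : E) :
    (fun z => ⟪z, u⟫) '' segment ℝ x y = uIcc ⟪x, u⟫ ⟪y, u⟫ := by
  rw [← segment_eq_uIcc]
  exact image_segment ℝ ((innerₗ E).flip u).toAffineMap x y

variable [MeasurableSpace E] {σ : Measure E}

theorem lintegral_abs_inner_le (hσ : ∀ᵐ u ∂σ, ‖u‖ ≤ 1) (v : E) :
    ∫⁻ u, ENNReal.ofReal |⟪v, u⟫| ∂σ ≤ ENNReal.ofReal ‖v‖ * σ univ := by
  calc ∫⁻ u, ENNReal.ofReal |⟪v, u⟫| ∂σ ≤ ∫⁻ _, ENNReal.ofReal ‖v‖ ∂σ := by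
        refine lintegral_mono_ae ?_
        filter_upwards [hσ] with u hu
        refine ENNReal.ofReal_le_ofReal ((abs_real_inner_le_norm v u).trans ?_)
        simpa using mul_le_mul_of_nonneg_left hu (norm_nonneg v)
    _ = ENNReal.ofReal ‖v‖ * σ univ := lintegral_const _

variable [BorelSpace E]

theorem measurable_ofReal_abs_inner (v : E) :
    Measurable fun u : E => ENNReal.ofReal |⟪v, u⟫| := by
  fun_prop

theorem lintegral_abs_inner_eq_of_norm_eq (hinv : ∀ g : E ≃ₗᵢ[ℝ] E, σ.map g = σ) {v w : E}
    (h : ‖v‖ = ‖w‖) :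
    ∫⁻ u, ENNReal.ofReal |⟪v, u⟫| ∂σ = ∫⁻ u, ENNReal.ofReal |⟪w, u⟫| ∂σ := by
  obtain ⟨g, rfl⟩ := exists_linearIsometryEquiv_apply_eq h.symm
  conv_lhs => rw [← hinv g]
  rw [lintegral_map (measurable_ofReal_abs_inner _) g.continuous.measurable]
  simp_rw [g.inner_map_map]

theorem lintegral_abs_inner_eq_norm_mul (hinv : ∀ g : E ≃ₗᵢ[ℝ] E, σ.map g = σ) {e : E}
    (he : ‖e‖ = 1) (v : E) :
    ∫⁻ u, ENNReal.ofReal |⟪v, u⟫| ∂σ = ENNReal.ofReal ‖v‖ * ∫⁻ u, ENNReal.ofReal |⟪e, u⟫| ∂σ := by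
  rw [lintegral_abs_inner_eq_of_norm_eq hinv (w := ‖v‖ • e) (by simp [norm_smul, he]),
    ← lintegral_const_mul _ (measurable_ofReal_abs_inner e)]
  simp_rw [real_inner_smul_left, abs_mul, abs_norm, ENNReal.ofReal_mul (norm_nonneg v)]

theorem exists_lintegral_abs_inner_ne_zero [FiniteDimensional ℝ E] (hσ : σ {0}ᶜ ≠ 0) :
    ∃ v : E, ∫⁻ u, ENNReal.ofReal |⟪v, u⟫| ∂σ ≠ 0 := by
  by_contra! h
  let b := Module.finBasis ℝ E
  have horth : ∀ᵐ u ∂σ, ∀ i, ⟪b i, u⟫ = 0 := ae_all_iff.2 fun i => by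
    filter_upwards [(lintegral_eq_zero_iff (measurable_ofReal_abs_inner _)).1 (h (b i))] with u hu
    simpa using hu
  refine hσ (ae_iff.1 ?_)
  filter_upwards [horth] with u hu
  exact InnerProductSpace.ext_inner_left_basis b fun i => by simp [hu i]

theorem prod_volume_hyperplanes_meeting_segment (x y : E) :
    (σ.prod volume) {p : E × ℝ | ‖p.1‖ = 1 ∧ ∃ z ∈ segment ℝ x y, ⟪z, p.1⟫ = p.2} =
      ∫⁻ u in sphere 0 1, ENNReal.ofReal |⟪x - y, u⟫| ∂σ := by
  have hset : {p : E × ℝ | ‖p.1‖ = 1 ∧ ∃ z ∈ segment ℝ x y, ⟪z, p.1⟫ = p.2} =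
      {p | p.1 ∈ sphere 0 1 ∧ p.2 ∈ uIcc ⟪x, p.1⟫ ⟪y, p.1⟫} := by
    ext p
    simp only [mem_ofPred_eq, mem_sphere_zero_iff_norm, ← image_inner_segment]
    rfl
  have hmeas : MeasurableSet {p : E × ℝ | p.1 ∈ sphere 0 1 ∧ p.2 ∈ uIcc ⟪x, p.1⟫ ⟪y, p.1⟫} :=
    (measurable_fst isClosed_sphere.measurableSet).inter
      ((measurableSet_le (by fun_prop) measurable_snd).inter
        (measurableSet_le measurable_snd (by fun_prop)))
  rw [hset, Measure.prod_apply hmeas, ← lintegral_indicator isClosed_sphere.measurableSet]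
  congr with u
  by_cases hu : u ∈ sphere 0 1
  · simp only [indicator_of_mem hu, preimage_ofPred_eq, hu, true_and, ofPred_mem_eq,
      Real.volume_interval, inner_sub_left, abs_sub_comm]
  · simp only [indicator_of_notMem hu, preimage_ofPred_eq, hu, false_and, ofPred_false,
      measure_empty]

theorem euclidean_crofton_formula_general (n : ℕ)
    (σ : Measure (EuclideanSpace ℝ (Fin n)))
    (hinv : ∀ g : EuclideanSpace ℝ (Fin n) ≃ₗᵢ[ℝ] EuclideanSpace ℝ (Fin n),
      σ.map g = σ)
    (hsupp : σ (sphere (0 : EuclideanSpace ℝ (Fin n)) 1)ᶜ = 0)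
    (hne : σ (sphere (0 : EuclideanSpace ℝ (Fin n)) 1) ≠ 0)
    (hfin : σ (sphere (0 : EuclideanSpace ℝ (Fin n)) 1) ≠ ⊤) :
    ∃ k : ℝ, 0 < k ∧ ∀ x y : EuclideanSpace ℝ (Fin n),
      dist x y =
        k * ((σ.prod volume) {p : EuclideanSpace ℝ (Fin n) × ℝ |
          ‖p.1‖ = 1 ∧ ∃ z ∈ segment ℝ x y, inner ℝ z p.1 = p.2}).toReal := by
  have hσ : σ.restrict (sphere 0 1) = σ := Measure.restrict_eq_self_of_ae_mem hsupp
  obtain ⟨e, he⟩ := nonempty_of_measure_ne_zero hne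
  rw [mem_sphere_zero_iff_norm] at he
  set C := ∫⁻ u, ENNReal.ofReal |⟪e, u⟫| ∂σ
  have hC0 : C ≠ 0 := by
    obtain ⟨v, hv⟩ := exists_lintegral_abs_inner_ne_zero (σ := σ)
      fun h => hne (measure_mono_null (fun u hu => ne_zero_of_mem_unit_sphere ⟨u, hu⟩) h)
    rw [lintegral_abs_inner_eq_norm_mul hinv he] at hv
    exact right_ne_zero_of_mul hv
  have hCtop : C ≠ ⊤ := by
    refine ne_top_of_le_ne_top ?_ (lintegral_abs_inner_le ?_ e)
    · rwa [he, ENNReal.ofReal_one, one_mul, ← hσ, Measure.restrict_apply_univ]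
    · filter_upwards [hsupp] with u hu using (mem_sphere_zero_iff_norm.1 hu).le
  refine ⟨C.toReal⁻¹, inv_pos.2 (ENNReal.toReal_pos hC0 hCtop), fun x y => ?_⟩
  rw [prod_volume_hyperplanes_meeting_segment, hσ, lintegral_abs_inner_eq_norm_mul hinv he,
    ENNReal.toReal_mul, ENNReal.toReal_ofReal (norm_nonneg _), ← dist_eq_norm,
    mul_comm, mul_assoc, mul_inv_cancel₀ (ENNReal.toReal_ne_zero.2 ⟨hC0, hCtop⟩), mul_one]

/-- Classical Crofton formula in `ℝⁿ`: parametrize affine hyperplanes by pairs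
`(u,t) ∈ Sⁿ⁻¹ × ℝ` via `{z : ⟨z,u⟩ = t}`, with rigid-motion-invariant measure
`μ = σ ⊗ Leb`, where `σ` is the rotation-invariant surface measure on `Sⁿ⁻¹`
(a nonzero finite rotation-invariant measure concentrated on the unit sphere).
Then there is a fixed constant `k > 0` such that for all `x, y ∈ ℝⁿ`, the
Euclidean distance `|x − y|` equals `k` times the `μ`-measure of the set of
hyperplanes meeting the segment `[x,y]`. -/
theorem euclidean_crofton_formula (n : ℕ) (hn : 1 ≤ n)
    (σ : Measure (EuclideanSpace ℝ (Fin n)))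
    (hinv : ∀ g : EuclideanSpace ℝ (Fin n) ≃ₗᵢ[ℝ] EuclideanSpace ℝ (Fin n),
      σ.map g = σ)
    (hsupp : σ (sphere (0 : EuclideanSpace ℝ (Fin n)) 1)ᶜ = 0)
    (hne : σ (sphere (0 : EuclideanSpace ℝ (Fin n)) 1) ≠ 0)
    (hfin : σ (sphere (0 : EuclideanSpace ℝ (Fin n)) 1) ≠ ⊤) :
    ∃ k : ℝ, 0 < k ∧ ∀ x y : EuclideanSpace ℝ (Fin n),
      dist x y =
        k * ((σ.prod volume) {p : EuclideanSpace ℝ (Fin n) × ℝ |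
          ‖p.1‖ = 1 ∧ ∃ z ∈ segment ℝ x y, inner ℝ z p.1 = p.2}).toReal :=
  euclidean_crofton_formula_general n σ hinv hsupp hne hfin
end
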